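/- arXiv:2212.06766 — 9 statements merged into one kernel-verified Lean document; each statement's English description precedes it below -/
import Mathlib

section
/- Let σ = τ₁τ₂⋯τ_k ∈ S_n be a product of k pairwise disjoint cycles of length d with Fix(σ) = ∅. Suppose π₀ ∈ Cent₀(σ) fixes every point moved by τ_{m+1},...,τ_k and conjugation by π₀ permutes τ₁,...,τ_m cyclically, i.e. π₀τᵢπ₀⁻¹ = τ_{i+1} for 1 ≤ i < m and π₀τ_mπ₀⁻¹ = τ₁. Then there exists an integer z such that π₀^m = τ₁^z τ₂^z ⋯ τ_m^z. -/
open Equiv Equiv.Perm Finset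

/-- The "non-trivial centralizer" `Cent₀(σ)`: permutations commuting with `σ`
whose support is contained in the support of `σ`. -/
def Cent0 {n : ℕ} (σ : Equiv.Perm (Fin n)) : Subgroup (Equiv.Perm (Fin n)) where
  carrier := {π | Commute π σ ∧ π.support ⊆ σ.support}
  one_mem' := ⟨Commute.one_left σ, by simp⟩
  mul_mem' := by
    intro a b ha hb
    exact ⟨ha.1.mul_left hb.1, (Equiv.Perm.support_mul_le a b).trans (sup_le ha.2 hb.2)⟩
  inv_mem' := by
    intro a ha
    exact ⟨ha.1.inv_left, by rw [Equiv.Perm.support_inv]; exact ha.2⟩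

/-- The product `∏_{i ∈ s} τᵢ^{zᵢ}` of powers of pairwise disjoint permutations. -/
def Kprod {n k : ℕ} (τ : Fin k → Equiv.Perm (Fin n))
    (hdisj : ∀ i j, i ≠ j → Equiv.Perm.Disjoint (τ i) (τ j))
    (s : Finset (Fin k)) (z : Fin k → ℤ) : Equiv.Perm (Fin n) :=
  s.noncommProd (fun i => τ i ^ z i)
    (fun a _ b _ hab => Commute.zpow_zpow ((hdisj a b hab).commute) _ _)

/-- The subgroup `H_σ = { x ∈ S_{X_σ} : xσx⁻¹ = σ^z for some integer z }`, as a set. -/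
def Hgrp {n : ℕ} (σ : Equiv.Perm (Fin n)) : Set (Equiv.Perm (Fin n)) :=
  {x | x.support ⊆ σ.support ∧ ∃ z : ℤ, x * σ * x⁻¹ = σ ^ z}

/-! The power `π₀^m` commutes with the cycle `τ₁`, so on the support of `τ₁` it acts as some
power `τ₁^z`. Conjugating by `π₀^i`, which commutes with `π₀^m` and carries `τ₁` to `τ_{i+1}`,
shows that `π₀^m` acts as `τ_{i+1}^z` on the support of `τ_{i+1}`, with the same `z`. On the
remaining supports `π₀` is the identity, and since `σ` has no fixed points these supports cover
everything. -/

theorem conj_pow_eq_of_conj_eq_succ {G : Type*} [Group G] (g : G) (f : ℕ → G)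
    (hf : ∀ i, g * f i * g⁻¹ = f (i + 1)) (j : ℕ) : g ^ j * f 0 * (g ^ j)⁻¹ = f j := by
  induction j with
  | zero => simp
  | succ j ih =>
    rw [← hf, ← ih]
    group

namespace Equiv.Perm

variable {α : Type*}

theorem IsCycle.exists_zpow_eqOn_support_of_commute [Fintype α] [DecidableEq α]
    {g c : Perm α} (hc : c.IsCycle) (h : Commute g c) :
    ∃ z : ℤ, ∀ x ∈ c.support, g x = (c ^ z) x := by
  obtain ⟨hc', z, hz⟩ := hc.commute_iff.mp h
  exact ⟨z, fun x hx => by rw [← ofSubtype_subtypePerm_of_mem hc' hx, ← hz]⟩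

theorem eqOn_support_conj_of_eqOn_support [Fintype α] [DecidableEq α] {g h c : Perm α} {z : ℤ}
    (hgh : Commute g h) (hg : ∀ x ∈ c.support, g x = (c ^ z) x) :
    ∀ x ∈ (h * c * h⁻¹).support, g x = ((h * c * h⁻¹) ^ z) x := by
  intro x hx
  have hx' : h⁻¹ x ∈ c.support := by
    rw [support_conj, mem_map_equiv] at hx
    exact hx
  calc g x = (h * g * h⁻¹) x := by rw [← hgh.eq, mul_inv_cancel_right]
    _ = h (g (h⁻¹ x)) := rfl
    _ = h ((c ^ z) (h⁻¹ x)) := by rw [hg _ hx']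
    _ = ((h * c * h⁻¹) ^ z) x := by rw [conj_zpow]; rfl

theorem list_prod_apply_eq_self {l : List (Perm α)} {x : α} (h : ∀ f ∈ l, f x = x) :
    l.prod x = x :=
  List.prod_induction (fun g : Perm α => g x = x)
    (fun a b ha hb => by rw [mul_apply, hb, ha]) rfl h

theorem noncommProd_apply_eq_self {ι : Type*} {s : Finset ι} {f : ι → Perm α}
    (comm : (s : Set ι).Pairwise fun a b => Commute (f a) (f b)) {x : α}
    (h : ∀ i ∈ s, f i x = x) : s.noncommProd f comm x = x :=
  noncommProd_induction s f comm (fun g : Perm α => g x = x)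
    (fun a b ha hb => by rw [mul_apply, hb, ha]) rfl h

theorem noncommProd_apply_of_forall_ne_apply_eq_self {ι : Type*} [DecidableEq ι] {s : Finset ι}
    {f : ι → Perm α} (comm : (s : Set ι).Pairwise fun a b => Commute (f a) (f b)) {i : ι}
    (hi : i ∈ s) {x : α} (h : ∀ j ∈ s, j ≠ i → f j x = x) :
    s.noncommProd f comm x = f i x := by
  rw [← mul_noncommProd_erase _ hi, mul_apply]
  exact congrArg (f i) <|
    noncommProd_apply_eq_self _ fun j hj => h j (mem_of_mem_erase hj) (ne_of_mem_erase hj)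

theorem Disjoint.zpow_apply_eq_self_of_mem_support [Fintype α] [DecidableEq α] {f g : Perm α}
    (h : f.Disjoint g) {x : α} (hx : x ∈ g.support) (z : ℤ) : (f ^ z) x = x :=
  zpow_apply_eq_self_of_apply_eq_self ((h x).resolve_right (mem_support.mp hx)) z

end Equiv.Perm

section Kprod

variable {n k : ℕ} {τ : Fin k → Perm (Fin n)} (hdisj : ∀ i j, i ≠ j → (τ i).Disjoint (τ j))
  (s : Finset (Fin k)) (z : Fin k → ℤ)

theorem Kprod_apply_of_mem_support {i : Fin k} (hi : i ∈ s) {x : Fin n}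
    (hx : x ∈ (τ i).support) : Kprod τ hdisj s z x = (τ i ^ z i) x :=
  noncommProd_apply_of_forall_ne_apply_eq_self _ hi fun _ _ hji =>
    (hdisj _ _ hji).zpow_apply_eq_self_of_mem_support hx _

theorem Kprod_apply_of_mem_support_of_notMem {i : Fin k} (hi : i ∉ s) {x : Fin n}
    (hx : x ∈ (τ i).support) : Kprod τ hdisj s z x = x :=
  noncommProd_apply_eq_self _ fun _ hj =>
    (hdisj _ _ (ne_of_mem_of_not_mem hj hi)).zpow_apply_eq_self_of_mem_support hx _

end Kprod

theorem pow_of_cyclically_permuting_element_general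
    {n k m : ℕ} (σ : Equiv.Perm (Fin n)) (τ : Fin k → Equiv.Perm (Fin n))
    (hcyc : ∀ i, (τ i).IsCycle)
    (hdisj : ∀ i j, i ≠ j → Equiv.Perm.Disjoint (τ i) (τ j))
    (hσ : σ = (List.ofFn τ).prod)
    (hfix : ∀ x : Fin n, σ x ≠ x)
    (hm0 : 0 < m) (hm : m ≤ k)
    (π₀ : Equiv.Perm (Fin n))
    (hfixes : ∀ j : Fin k, m ≤ (j : ℕ) → ∀ x ∈ (τ j).support, π₀ x = x)
    (hcyclic : ∀ i : ℕ, ∀ h : i < m,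
      π₀ * τ ⟨i, lt_of_lt_of_le h hm⟩ * π₀⁻¹ =
        τ ⟨(i + 1) % m, lt_of_lt_of_le (Nat.mod_lt _ hm0) hm⟩) :
    ∃ z : ℤ, π₀ ^ m =
      Kprod τ hdisj (Finset.univ.filter fun i : Fin k => (i : ℕ) < m) (fun _ => z) := by
  let f : ℕ → Perm (Fin n) := fun i => τ ⟨i % m, lt_of_lt_of_le (Nat.mod_lt _ hm0) hm⟩
  have hconj : ∀ j, π₀ ^ j * f 0 * (π₀ ^ j)⁻¹ = f j :=
    conj_pow_eq_of_conj_eq_succ π₀ f fun i => by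
      simpa only [f, Nat.mod_add_mod] using hcyclic (i % m) (Nat.mod_lt _ hm0)
  have hcomm : Commute (π₀ ^ m) (f 0) := by
    have hperiod : f m = f 0 := by simp only [f, Nat.mod_self, Nat.zero_mod]
    calc π₀ ^ m * f 0 = (π₀ ^ m * f 0 * (π₀ ^ m)⁻¹) * π₀ ^ m := by group
      _ = f 0 * π₀ ^ m := by rw [hconj, hperiod]
  obtain ⟨z, hz⟩ := (hcyc _).exists_zpow_eqOn_support_of_commute hcomm
  refine ⟨z, Equiv.ext fun x => ?_⟩
  obtain ⟨i, hi⟩ : ∃ i, x ∈ (τ i).support := by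
    by_contra! h
    exact hfix x (hσ ▸ list_prod_apply_eq_self (by simpa [List.mem_ofFn] using h))
  by_cases him : (i : ℕ) < m
  · have hfi : f i = τ i := by simp only [f, Nat.mod_eq_of_lt him]
    rw [Kprod_apply_of_mem_support hdisj _ _ (by simpa using him) hi, ← hfi, ← hconj]
    refine eqOn_support_conj_of_eqOn_support (Commute.pow_pow_self π₀ m i) hz x ?_
    rwa [hconj, hfi]
  · rw [Kprod_apply_of_mem_support_of_notMem hdisj _ _ (by simpa using him) hi]
    exact pow_apply_eq_self_of_apply_eq_self (hfixes i (not_lt.mp him) x hi) m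

/-- Let `σ = τ₁⋯τ_k` be a product of `k` pairwise disjoint cycles of
length `d` with no fixed points. If `π₀ ∈ Cent₀(σ)` fixes every point moved by
`τ_{m+1},…,τ_k` and permutes `τ₁,…,τ_m` cyclically, then `π₀^m = τ₁^z⋯τ_m^z` for some
integer `z`. (Cycles are indexed by `Fin k`, so the first `m` cycles are those with
index `< m`.) -/
theorem pow_of_cyclically_permuting_element
    {n k d m : ℕ} (σ : Equiv.Perm (Fin n)) (τ : Fin k → Equiv.Perm (Fin n))
    (hcyc : ∀ i, (τ i).IsCycle) (hlen : ∀ i, (τ i).support.card = d)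
    (hdisj : ∀ i j, i ≠ j → Equiv.Perm.Disjoint (τ i) (τ j))
    (hσ : σ = (List.ofFn τ).prod)
    (hfix : ∀ x : Fin n, σ x ≠ x)
    (hm0 : 0 < m) (hm : m ≤ k)
    (π₀ : Equiv.Perm (Fin n)) (hπ₀ : π₀ ∈ Cent0 σ)
    (hfixes : ∀ j : Fin k, m ≤ (j : ℕ) → ∀ x ∈ (τ j).support, π₀ x = x)
    (hcyclic : ∀ i : ℕ, ∀ h : i < m,
      π₀ * τ ⟨i, lt_of_lt_of_le h hm⟩ * π₀⁻¹ =
        τ ⟨(i + 1) % m, lt_of_lt_of_le (Nat.mod_lt _ hm0) hm⟩) :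
    ∃ z : ℤ, π₀ ^ m =
      Kprod τ hdisj (Finset.univ.filter fun i : Fin k => (i : ℕ) < m) (fun _ => z) :=
  pow_of_cyclically_permuting_element_general σ τ hcyc hdisj hσ hfix hm0 hm π₀ hfixes hcyclic
end

section
/- Let σ = τ₁τ₂⋯τ_k ∈ S_n be a product of k pairwise disjoint cycles of length d with Fix(σ) = ∅, and let π, π' ∈ Cent₀(σ) be such that the image of π under the induced homomorphism Cent₀(σ) → Cent₀(σ)/K ≅ S_k is a single m-cycle. If the order of σ (which equals d) and the order of π are relatively prime, and π and π' are conjugate in S_n, then π and π' are conjugate in Cent₀(σ). -/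
open Equiv Equiv.Perm Finset

private lemma prod_apply_eq_self {n : ℕ} {l : List (Equiv.Perm (Fin n))} {x : Fin n}
    (h : ∀ f ∈ l, f x = x) : l.prod x = x := by
  induction l with
  | nil => rfl
  | cons a t ih =>
    rw [List.prod_cons, Equiv.Perm.mul_apply,
      ih (fun f hf => h f (List.mem_cons_of_mem a hf))]
    exact h a List.mem_cons_self

private lemma perm_pow_eq_iff_minper_dvd {β : Type*} [Fintype β] (e : Equiv.Perm β) (y : β)
    (j : ℕ) : (e ^ j) y = y ↔ Function.minimalPeriod ⇑e y ∣ j := by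
  rw [← Function.isPeriodicPt_iff_minimalPeriod_dvd]
  exact Iff.rfl

private lemma perm_minper_pos {β : Type*} [Fintype β] (e : Equiv.Perm β) (y : β) :
    0 < Function.minimalPeriod ⇑e y := by
  apply Function.IsPeriodicPt.minimalPeriod_pos (orderOf_pos e)
  show ((⇑e)^[orderOf e]) y = y
  rw [Equiv.Perm.iterate_eq_pow, pow_orderOf_eq_one, Equiv.Perm.one_apply]

private lemma support_cycleOf_card_eq {N : ℕ} (f : Equiv.Perm (Fin N)) (x : Fin N) (q : ℕ)
    (hq : 2 ≤ q) (hiff : ∀ j : ℕ, (f ^ j) x = x ↔ q ∣ j) :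
    (f.cycleOf x).support.card = q := by
  have hfx : f x ≠ x := by
    intro h
    have h1 : q ∣ 1 := (hiff 1).1 (by simpa using h)
    have := Nat.le_of_dvd one_pos h1
    omega
  have himg : (f.cycleOf x).support = Finset.image (fun t : Fin q => (f ^ (t : ℕ)) x)
      Finset.univ := by
    ext y
    rw [Equiv.Perm.mem_support_cycleOf_iff' hfx]
    constructor
    · rintro hsc
      obtain ⟨t, -, rfl⟩ := hsc.exists_pow_eq'
      refine Finset.mem_image.2 ⟨⟨t % q, Nat.mod_lt _ (by omega)⟩, Finset.mem_univ _, ?_⟩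
      show (f ^ (t % q)) x = (f ^ t) x
      conv_rhs => rw [← Nat.mod_add_div t q]
      rw [pow_add, Equiv.Perm.mul_apply, (hiff _).2 (dvd_mul_right q (t / q))]
    · intro hy
      obtain ⟨t, -, rfl⟩ := Finset.mem_image.1 hy
      exact ⟨(t : ℕ), by rw [zpow_natCast]⟩
  have hinjle : ∀ s t : Fin q, (s : ℕ) ≤ (t : ℕ) → (f ^ (s : ℕ)) x = (f ^ (t : ℕ)) x → s = t := by
    intro s t hst h
    have h2 : (f ^ ((t : ℕ) - (s : ℕ))) x = x := by
      apply (f ^ (s : ℕ)).injective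
      rw [← Equiv.Perm.mul_apply, ← pow_add, Nat.add_sub_cancel' hst]
      exact h.symm
    have h3 := Nat.eq_zero_of_dvd_of_lt ((hiff _).1 h2)
    have h4 : (t : ℕ) - (s : ℕ) = 0 := by
      rcases Nat.eq_zero_or_pos ((t : ℕ) - (s : ℕ)) with h0 | h0
      · exact h0
      · exact absurd (h3 (by omega)) (by omega)
    exact Fin.ext (by omega)
  have hinj : Function.Injective (fun t : Fin q => (f ^ (t : ℕ)) x) := by
    intro s t h
    rcases le_total (s : ℕ) (t : ℕ) with hle | hle
    · exact hinjle s t hle h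
    · exact (hinjle t s hle h.symm).symm
  rw [himg, Finset.card_image_of_injective _ hinj, Finset.card_univ, Fintype.card_fin]

private lemma card_cycleOf_mem_cycleType {N : ℕ} (f : Equiv.Perm (Fin N)) {x : Fin N}
    (hx : f x ≠ x) : (f.cycleOf x).support.card ∈ f.cycleType := by
  rw [Equiv.Perm.cycleType_def]
  refine Multiset.mem_map.2 ⟨f.cycleOf x, ?_, rfl⟩
  rw [Finset.mem_val, Equiv.Perm.cycleOf_mem_cycleFactorsFinset_iff, Equiv.Perm.mem_support]
  exact hx

/-- `σ = τ₁⋯τ_k` is a product of `k` pairwise disjoint `d`-cycles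
without fixed points, `π, π' ∈ Cent₀(σ)`, and the image of `π` under the induced map
`Cent₀(σ) → S_k` (encoded by `g` with `π τᵢ π⁻¹ = τ_{g i}`) is a single `m`-cycle.
If `d` (the order of `σ`) is coprime to the order of `π` and `π, π'` are conjugate in
`S_n`, then `π` and `π'` are conjugate in `Cent₀(σ)`. -/
theorem conjugate_in_cent0_of_coprime_order
    {n k d m : ℕ} (σ : Equiv.Perm (Fin n)) (τ : Fin k → Equiv.Perm (Fin n))
    (hcyc : ∀ i, (τ i).IsCycle) (hlen : ∀ i, (τ i).support.card = d)
    (hdisj : ∀ i j, i ≠ j → Equiv.Perm.Disjoint (τ i) (τ j))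
    (hσ : σ = (List.ofFn τ).prod)
    (hfix : ∀ x : Fin n, σ x ≠ x)
    (π π' : Equiv.Perm (Fin n)) (hπmem : π ∈ Cent0 σ) (hπ'mem : π' ∈ Cent0 σ)
    (g : Equiv.Perm (Fin k)) (hgconj : ∀ i, π * τ i * π⁻¹ = τ (g i))
    (hgcycle : g.IsCycle) (hgcard : g.support.card = m)
    (hcop : Nat.Coprime d (orderOf π))
    (hconj : IsConj π π') :
    ∃ ρ ∈ Cent0 σ, ρ * π * ρ⁻¹ = π' := by
  classical
  obtain ⟨i₀, hi₀, -⟩ := id hgcycle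
  have hd2 : 2 ≤ d := by rw [← hlen i₀]; exact (hcyc i₀).two_le_card_support
  have hm2 : 2 ≤ m := by rw [← hgcard]; exact hgcycle.two_le_card_support
  have hτinj : Function.Injective τ := by
    intro i j hij
    by_contra hne
    have h1 := hdisj i j hne
    rw [hij, Equiv.Perm.disjoint_refl_iff] at h1
    exact (hcyc j).ne_one h1
  have hfacts : σ.cycleFactorsFinset = (List.ofFn τ).toFinset := by
    rw [Equiv.Perm.cycleFactorsFinset_eq_list_toFinset (List.nodup_ofFn.2 hτinj)]
    refine ⟨?_, ?_, hσ.symm⟩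
    · intro f hf
      obtain ⟨i, rfl⟩ := List.mem_ofFn.1 hf
      exact hcyc i
    · rw [List.pairwise_ofFn]
      intro i j hij
      exact hdisj i j (Fin.ne_of_lt hij)
  have hmemfac : ∀ i, τ i ∈ σ.cycleFactorsFinset := by
    intro i
    rw [hfacts, List.mem_toFinset, List.mem_ofFn]
    exact ⟨i, rfl⟩
  have happly : ∀ i, ∀ x ∈ (τ i).support, σ x = τ i x := by
    intro i x hx
    exact ((Equiv.Perm.mem_cycleFactorsFinset_iff.1 (hmemfac i)).2 x hx).symm
  have huniq : ∀ {i j : Fin k} {x : Fin n},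
      x ∈ (τ i).support → x ∈ (τ j).support → i = j := by
    intro i j x hxi hxj
    by_contra hne
    rcases (hdisj i j hne) x with h | h
    · exact (Equiv.Perm.mem_support.1 hxi) h
    · exact (Equiv.Perm.mem_support.1 hxj) h
  have hcover : ∀ x : Fin n, ∃ i, x ∈ (τ i).support := by
    intro x
    by_contra hno
    push_neg at hno
    apply hfix x
    rw [hσ]
    apply prod_apply_eq_self
    intro f hf
    obtain ⟨i, rfl⟩ := List.mem_ofFn.1 hf
    exact Equiv.Perm.notMem_support.1 (hno i)
  have hσpow : ∀ i, ∀ x ∈ (τ i).support, ∀ j : ℕ, (σ ^ j) x = ((τ i) ^ j) x := by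
    intro i x hx j
    induction j with
    | zero => rfl
    | succ j ih =>
      rw [pow_succ', pow_succ', Equiv.Perm.mul_apply, Equiv.Perm.mul_apply, ih]
      exact happly i _ (Equiv.Perm.pow_apply_mem_support.2 hx)
  have htau_iff : ∀ i, ∀ x ∈ (τ i).support, ∀ j : ℕ, (((τ i) ^ j) x = x ↔ d ∣ j) := by
    intro i x hx j
    have hd : orderOf (τ i) = d := by rw [(hcyc i).orderOf, hlen i]
    constructor
    · intro h
      rw [← hd]
      exact orderOf_dvd_of_pow_eq_one
        (((hcyc i).pow_eq_one_iff' (Equiv.Perm.mem_support.1 hx)).2 h)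
    · intro h
      rw [← hd, orderOf_dvd_iff_pow_eq_one] at h
      rw [h]
      rfl
  have hconjpow : ∀ (ρ : Equiv.Perm (Fin n)) (h : Equiv.Perm (Fin k)),
      (∀ i, ρ * τ i * ρ⁻¹ = τ (h i)) → ∀ (j : ℕ) (i : Fin k),
      ρ ^ j * τ i * (ρ ^ j)⁻¹ = τ ((h ^ j) i) := by
    intro ρ h hc j
    induction j with
    | zero => intro i; simp
    | succ j ih =>
      intro i
      have hstep : ρ ^ (j + 1) * τ i * (ρ ^ (j + 1))⁻¹
          = ρ * (ρ ^ j * τ i * (ρ ^ j)⁻¹) * ρ⁻¹ := by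
        rw [pow_succ']; group
      rw [hstep, ih i, hc ((h ^ j) i)]
      congr 1
      rw [pow_succ', Equiv.Perm.mul_apply]
  have hmapsupp : ∀ (ρ : Equiv.Perm (Fin n)) (i j : Fin k), (ρ * τ i * ρ⁻¹ = τ j) →
      ∀ x ∈ (τ i).support, ρ x ∈ (τ j).support := by
    intro ρ i j hc x hx
    rw [← hc, Equiv.Perm.support_conj]
    exact Finset.mem_map.2 ⟨x, hx, rfl⟩
  have hfixcyc : ∀ (ρ : Equiv.Perm (Fin n)), Nat.Coprime d (orderOf ρ) → ∀ (i : Fin k),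
      (ρ * τ i * ρ⁻¹ = τ i) → ∀ x ∈ (τ i).support, ρ x = x := by
    intro ρ hcop' i hci x hx
    have hcomm : Commute ρ (τ i) := by
      rw [Commute, SemiconjBy]
      conv_rhs => rw [← hci]
      group
    have hρx : ρ x ∈ (τ i).support := hmapsupp ρ i i hci x hx
    obtain ⟨a, ha⟩ := (hcyc i).exists_pow_eq (Equiv.Perm.mem_support.1 hx)
      (Equiv.Perm.mem_support.1 hρx)
    have hpow : ∀ s : ℕ, (ρ ^ s) x = ((τ i) ^ (s * a)) x := by
      intro s
      induction s with
      | zero => simp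
      | succ s ih =>
        rw [pow_succ', Equiv.Perm.mul_apply, ih, ← Equiv.Perm.mul_apply,
          (hcomm.pow_right (s * a)).eq, Equiv.Perm.mul_apply, ← ha,
          ← Equiv.Perm.mul_apply, ← pow_add, Nat.succ_mul]
    have hNa : ((τ i) ^ (orderOf ρ * a)) x = x := by
      rw [← hpow (orderOf ρ), pow_orderOf_eq_one]
      rfl
    have hdNa : d ∣ orderOf ρ * a := (htau_iff i x hx _).1 hNa
    have hda : d ∣ a := hcop'.dvd_of_dvd_mul_left hdNa
    rw [← ha]
    exact (htau_iff i x hx a).2 hda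
  have hC1 : ∀ (ρ : Equiv.Perm (Fin n)) (h : Equiv.Perm (Fin k)),
      (∀ i, ρ * τ i * ρ⁻¹ = τ (h i)) → Nat.Coprime d (orderOf ρ) →
      ∀ (i : Fin k), ∀ x ∈ (τ i).support, ∀ j : ℕ, ((ρ ^ j) x = x ↔ (h ^ j) i = i) := by
    intro ρ h hc hcop' i x hx j
    constructor
    · intro hjx
      have hmem : (ρ ^ j) x ∈ (τ ((h ^ j) i)).support :=
        hmapsupp (ρ ^ j) i _ (hconjpow ρ h hc j i) x hx
      rw [hjx] at hmem
      exact huniq hmem hx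
    · intro hji
      refine hfixcyc (ρ ^ j) (hcop'.coprime_dvd_right (orderOf_pow_dvd j)) i ?_ x hx
      rw [hconjpow ρ h hc j i, hji]
  have hC2 : ∀ (ρ : Equiv.Perm (Fin n)) (h : Equiv.Perm (Fin k)), Commute ρ σ →
      (∀ i, ρ * τ i * ρ⁻¹ = τ (h i)) → Nat.Coprime d (orderOf ρ) →
      ∀ (i : Fin k), ∀ x ∈ (τ i).support, ∀ j : ℕ,
      (((σ * ρ) ^ j) x = x ↔ (d ∣ j ∧ (h ^ j) i = i)) := by
    intro ρ h hcm hc hcop' i x hx j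
    have hmp : ((σ * ρ) ^ j) x = (σ ^ j) ((ρ ^ j) x) := by
      rw [hcm.symm.mul_pow, Equiv.Perm.mul_apply]
    constructor
    · intro hj
      have hρj : (ρ ^ j) x ∈ (τ ((h ^ j) i)).support :=
        hmapsupp (ρ ^ j) i _ (hconjpow ρ h hc j i) x hx
      have hσρj : ((σ ^ j) ((ρ ^ j) x)) ∈ (τ ((h ^ j) i)).support := by
        rw [hσpow _ _ hρj j]
        exact Equiv.Perm.pow_apply_mem_support.2 hρj
      rw [hmp] at hj
      rw [hj] at hσρj
      have hii := huniq hσρj hx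
      have hρx : (ρ ^ j) x = x := (hC1 ρ h hc hcop' i x hx j).2 hii
      rw [hρx] at hj
      rw [hσpow i x hx j] at hj
      exact ⟨(htau_iff i x hx j).1 hj, hii⟩
    · rintro ⟨hdj, hji⟩
      rw [hmp, (hC1 ρ h hc hcop' i x hx j).2 hji, hσpow i x hx j]
      exact (htau_iff i x hx j).2 hdj
  -- the key computation of the two cycle types
  have key : ∀ (ρ : Equiv.Perm (Fin n)) (h : Equiv.Perm (Fin k)), Commute ρ σ →
      (∀ i, ρ * τ i * ρ⁻¹ = τ (h i)) → Nat.Coprime d (orderOf ρ) →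
      (∀ i, h i ≠ i → Function.minimalPeriod ⇑h i = m) → h.support.card = m →
      ρ.cycleType = Multiset.replicate d m ∧
      (σ * ρ).cycleType = (d * m) ::ₘ Multiset.replicate (k - m) d := by
    intro ρ h hcm hc hcop' hp hS
    set B : Finset (Fin n) := h.support.biUnion (fun i => (τ i).support) with hB
    have hmemB : ∀ {x : Fin n} {i : Fin k}, x ∈ (τ i).support → (x ∈ B ↔ i ∈ h.support) := by
      intro x i hx
      constructor
      · intro hxB
        obtain ⟨j, hj, hxj⟩ := Finset.mem_biUnion.1 hxB
        rwa [← huniq hx hxj] at hj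
      · intro hi
        exact Finset.mem_biUnion.2 ⟨i, hi, hx⟩
    have hperM : ∀ {i : Fin k}, i ∈ h.support → ∀ x ∈ (τ i).support, ∀ j : ℕ,
        ((ρ ^ j) x = x ↔ m ∣ j) := by
      intro i hi x hx j
      rw [hC1 ρ h hc hcop' i x hx j, perm_pow_eq_iff_minper_dvd h i j,
        hp i (Equiv.Perm.mem_support.1 hi)]
    have hfixoff : ∀ {i : Fin k}, i ∉ h.support → ∀ x ∈ (τ i).support, ρ x = x := by
      intro i hi x hx
      have h1 : (h ^ 1) i = i := by simpa using Equiv.Perm.notMem_support.1 hi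
      simpa using (hC1 ρ h hc hcop' i x hx 1).2 h1
    have hsupp : ρ.support = B := by
      ext x
      obtain ⟨i, hxi⟩ := hcover x
      rw [hmemB hxi]
      constructor
      · intro hxs
        by_contra hi
        exact (Equiv.Perm.mem_support.1 hxs) (hfixoff hi x hxi)
      · intro hi
        rw [Equiv.Perm.mem_support]
        intro hx1
        have h1 : m ∣ 1 := (hperM hi x hxi 1).1 (by simpa using hx1)
        have := Nat.le_of_dvd one_pos h1
        omega
    have hcardB : B.card = m * d := by
      rw [hB, Finset.card_biUnion (fun a _ b _ hab => (hdisj a b hab).disjoint_support),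
        Finset.sum_congr rfl (fun i _ => hlen i), Finset.sum_const, hS, smul_eq_mul]
    have hCTρ : ρ.cycleType = Multiset.replicate d m := by
      have hall : ∀ v ∈ ρ.cycleType, v = m := by
        intro v hv
        rw [Equiv.Perm.cycleType_def] at hv
        obtain ⟨c, hcmem, rfl⟩ := Multiset.mem_map.1 hv
        rw [Finset.mem_val] at hcmem
        obtain ⟨x, hcx, -⟩ := (Equiv.Perm.mem_cycleFactorsFinset_iff.1 hcmem).1
        have hxc : x ∈ c.support := Equiv.Perm.mem_support.2 hcx
        have hceq : c = ρ.cycleOf x := Equiv.Perm.cycle_is_cycleOf hxc hcmem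
        have hxρ : x ∈ ρ.support := by
          rw [Equiv.Perm.mem_support,
            ← (Equiv.Perm.mem_cycleFactorsFinset_iff.1 hcmem).2 x hxc]
          exact hcx
        obtain ⟨i, hxi⟩ := hcover x
        have hiS : i ∈ h.support := (hmemB hxi).1 (by rw [← hsupp]; exact hxρ)
        show (Finset.card ∘ Equiv.Perm.support) c = m
        simp only [Function.comp_apply]
        rw [hceq]
        exact support_cycleOf_card_eq ρ x m hm2 (hperM hiS x hxi)
      have hrep := Multiset.eq_replicate_card.2 hall
      have hsum := Equiv.Perm.sum_cycleType ρ
      rw [hrep, Multiset.sum_replicate, smul_eq_mul, hsupp, hcardB] at hsum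
      have hcd : Multiset.card ρ.cycleType = d := by
        have h2 : Multiset.card ρ.cycleType * m = d * m := by rw [hsum, Nat.mul_comm]
        exact Nat.eq_of_mul_eq_mul_right (by omega) h2
      rw [hrep, hcd]
    refine ⟨hCTρ, ?_⟩
    have hSne : h.support.Nonempty := Finset.card_pos.1 (by omega)
    obtain ⟨iS, hiS⟩ := hSne
    obtain ⟨xS, hxS⟩ := Finset.card_pos.1 (show 0 < (τ iS).support.card by rw [hlen]; omega)
    have hmdvd : m ∣ orderOf ρ := (hperM hiS xS hxS (orderOf ρ)).1
      (by rw [pow_orderOf_eq_one]; rfl)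
    have hcopm : Nat.Coprime d m := hcop'.coprime_dvd_right hmdvd
    have hdm2 : 2 ≤ d * m := by nlinarith
    set f := σ * ρ with hf
    have hperB : ∀ {i : Fin k}, i ∈ h.support → ∀ x ∈ (τ i).support, ∀ j : ℕ,
        ((f ^ j) x = x ↔ d * m ∣ j) := by
      intro i hi x hx j
      rw [hf, hC2 ρ h hcm hc hcop' i x hx j, perm_pow_eq_iff_minper_dvd h i j,
        hp i (Equiv.Perm.mem_support.1 hi)]
      constructor
      · rintro ⟨h1, h2⟩
        exact Nat.Coprime.mul_dvd_of_dvd_of_dvd hcopm h1 h2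
      · intro hdm
        exact ⟨dvd_trans (dvd_mul_right d m) hdm, dvd_trans (dvd_mul_left m d) hdm⟩
    have hperoff : ∀ {i : Fin k}, i ∉ h.support → ∀ x ∈ (τ i).support, ∀ j : ℕ,
        ((f ^ j) x = x ↔ d ∣ j) := by
      intro i hi x hx j
      have h1 : h i = i := Equiv.Perm.notMem_support.1 hi
      have hfixj : ∀ j : ℕ, (h ^ j) i = i := by
        intro j
        induction j with
        | zero => rfl
        | succ j ih => rw [pow_succ, Equiv.Perm.mul_apply, h1, ih]
      rw [hf, hC2 ρ h hcm hc hcop' i x hx j]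
      simp [hfixj j]
    have hfsupp : f.support = Finset.univ := by
      ext x
      simp only [Finset.mem_univ, iff_true]
      obtain ⟨i, hxi⟩ := hcover x
      rw [Equiv.Perm.mem_support]
      intro hfx
      by_cases hi : i ∈ h.support
      · have h1 := (hperB hi x hxi 1).1 (by simpa using hfx)
        have := Nat.le_of_dvd one_pos h1
        omega
      · have h1 := (hperoff hi x hxi 1).1 (by simpa using hfx)
        have := Nat.le_of_dvd one_pos h1
        omega
    have hcarduniv : (Finset.univ : Finset (Fin n)).card = k * d := by
      have huniv : (Finset.univ : Finset (Fin n))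
          = Finset.univ.biUnion (fun i => (τ i).support) := by
        ext x
        simp only [Finset.mem_univ, true_iff]
        obtain ⟨i, hxi⟩ := hcover x
        exact Finset.mem_biUnion.2 ⟨i, Finset.mem_univ i, hxi⟩
      rw [huniv, Finset.card_biUnion (fun a _ b _ hab => (hdisj a b hab).disjoint_support),
        Finset.sum_congr rfl (fun i _ => hlen i), Finset.sum_const, Finset.card_univ,
        Fintype.card_fin, smul_eq_mul]
    have hx0B : xS ∈ B := (hmemB hxS).2 hiS
    have hfxS : f xS ≠ xS := Equiv.Perm.mem_support.1 (by rw [hfsupp]; exact Finset.mem_univ xS)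
    have hc0card : (f.cycleOf xS).support.card = d * m :=
      support_cycleOf_card_eq f xS (d * m) hdm2 (hperB hiS xS hxS)
    have hBinv : ∀ x ∈ B, f x ∈ B := by
      intro x hx
      obtain ⟨i, hxi⟩ := hcover x
      have hiS' : i ∈ h.support := (hmemB hxi).1 hx
      have h1 : ρ x ∈ (τ (h i)).support := hmapsupp ρ i (h i) (hc i) x hxi
      have h2 : f x ∈ (τ (h i)).support := by
        rw [hf, Equiv.Perm.mul_apply, happly _ _ h1]
        exact Equiv.Perm.apply_mem_support.2 h1
      exact (hmemB h2).2 (Equiv.Perm.apply_mem_support.2 hiS')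
    have hBpow : ∀ t : ℕ, (f ^ t) xS ∈ B := by
      intro t
      induction t with
      | zero => exact hx0B
      | succ t ih =>
        rw [pow_succ', Equiv.Perm.mul_apply]
        exact hBinv _ ih
    have hc0supp : (f.cycleOf xS).support = B := by
      apply Finset.eq_of_subset_of_card_le
      · intro y hy
        rw [Equiv.Perm.mem_support_cycleOf_iff' hfxS] at hy
        obtain ⟨t, -, rfl⟩ := hy.exists_pow_eq'
        exact hBpow t
      · exact le_of_eq (by rw [hcardB, hc0card, Nat.mul_comm])
    have hcyc0mem : f.cycleOf xS ∈ f.cycleFactorsFinset :=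
      Equiv.Perm.cycleOf_mem_cycleFactorsFinset_iff.2
        (by rw [hfsupp]; exact Finset.mem_univ xS)
    obtain ⟨t0, ht0⟩ := Multiset.exists_cons_of_mem (show f.cycleOf xS ∈ f.cycleFactorsFinset.val from hcyc0mem)
    have hnodup := f.cycleFactorsFinset.nodup
    rw [ht0, Multiset.nodup_cons] at hnodup
    have htall : ∀ c ∈ t0, c.support.card = d := by
      intro c hct
      have hcmem : c ∈ f.cycleFactorsFinset := by
        rw [← Finset.mem_val, ht0]
        exact Multiset.mem_cons_of_mem hct
      have hcne : c ≠ f.cycleOf xS := fun he => hnodup.1 (he ▸ hct)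
      obtain ⟨x, hcx, -⟩ := (Equiv.Perm.mem_cycleFactorsFinset_iff.1 hcmem).1
      have hxc : x ∈ c.support := Equiv.Perm.mem_support.2 hcx
      have hceq : c = f.cycleOf x := Equiv.Perm.cycle_is_cycleOf hxc hcmem
      obtain ⟨i, hxi⟩ := hcover x
      by_cases hi : i ∈ h.support
      · exfalso
        have hxB : x ∈ B := (hmemB hxi).2 hi
        rw [← hc0supp] at hxB
        have hsc : f.SameCycle xS x := (Equiv.Perm.mem_support_cycleOf_iff' hfxS).1 hxB
        exact hcne (by rw [hceq, hsc.cycleOf_eq])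
      · rw [hceq]
        exact support_cycleOf_card_eq f x d hd2 (hperoff hi x hxi)
    have hmk : m ≤ k := by
      rw [← hS]
      calc h.support.card ≤ (Finset.univ : Finset (Fin k)).card := Finset.card_le_univ _
      _ = k := by rw [Finset.card_univ, Fintype.card_fin]
    have hrep : Multiset.map (Finset.card ∘ Equiv.Perm.support) t0
        = Multiset.replicate (Multiset.card (Multiset.map (Finset.card ∘ Equiv.Perm.support) t0)) d := by
      apply Multiset.eq_replicate_card.2
      intro b hb
      obtain ⟨c, hc', rfl⟩ := Multiset.mem_map.1 hb
      simpa using htall c hc'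
    have hsum := Equiv.Perm.sum_cycleType f
    rw [Equiv.Perm.cycleType_def, ht0, Multiset.map_cons, Multiset.sum_cons, hrep,
      Multiset.sum_replicate, smul_eq_mul, hfsupp, hcarduniv] at hsum
    rw [show (Finset.card ∘ Equiv.Perm.support) (f.cycleOf xS) = d * m from hc0card] at hsum
    -- hsum : d * m + card * d = k * d
    have hcardt0 : Multiset.card (Multiset.map (Finset.card ∘ Equiv.Perm.support) t0)
        = k - m := by
      have h2 : (m + Multiset.card (Multiset.map (Finset.card ∘ Equiv.Perm.support) t0)) * d
          = k * d := by
        rw [Nat.add_mul, ← hsum, Nat.mul_comm d m]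
      have h3 := Nat.eq_of_mul_eq_mul_right (show 0 < d by omega) h2
      omega
    rw [Equiv.Perm.cycleType_def, ht0, Multiset.map_cons, hrep, hcardt0,
      show (Finset.card ∘ Equiv.Perm.support) (f.cycleOf xS) = d * m from hc0card]
  -- apply the key lemma to π
  have hpg : ∀ i, g i ≠ i → Function.minimalPeriod ⇑g i = m := by
    intro i hgi
    have hiff : ∀ j : ℕ, ((g ^ j) i = i ↔ m ∣ j) := by
      intro j
      constructor
      · intro hj
        have h1 : g ^ j = 1 := (hgcycle.pow_eq_one_iff' hgi).2 hj
        have h2 := orderOf_dvd_of_pow_eq_one h1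
        rwa [hgcycle.orderOf, hgcard] at h2
      · intro hj
        obtain ⟨t, rfl⟩ := hj
        rw [pow_mul]
        have h1 : g ^ m = 1 := by
          rw [← hgcard, ← hgcycle.orderOf]
          exact pow_orderOf_eq_one g
        rw [h1, one_pow]
        rfl
    have h1 : Function.minimalPeriod ⇑g i ∣ m := Function.IsPeriodicPt.minimalPeriod_dvd (by
      show ((⇑g)^[m]) i = i
      rw [Equiv.Perm.iterate_eq_pow]
      exact (hiff m).2 dvd_rfl)
    have h2 : m ∣ Function.minimalPeriod ⇑g i := (hiff _).1 (by
      show (g ^ Function.minimalPeriod ⇑g i) i = i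
      rw [← Equiv.Perm.iterate_eq_pow]
      exact Function.iterate_minimalPeriod)
    exact Nat.dvd_antisymm h1 h2
  obtain ⟨hCTπ, hCTσπ⟩ := key π g hπmem.1 hgconj hcop hpg hgcard
  -- conjugate data for π'
  have hconjσ' : π' * σ * π'⁻¹ = σ := by
    rw [hπ'mem.1.eq]
    group
  have hg'ex : ∀ i, ∃ j, π' * τ i * π'⁻¹ = τ j := by
    intro i
    have h1 : π' * τ i * π'⁻¹ ∈ σ.cycleFactorsFinset := by
      rw [← hconjσ']
      exact (Equiv.Perm.mem_cycleFactorsFinset_conj σ π' (τ i)).2 (hmemfac i)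
    rw [hfacts, List.mem_toFinset, List.mem_ofFn] at h1
    obtain ⟨j, hj⟩ := Set.mem_range.1 h1
    exact ⟨j, hj.symm⟩
  choose g'0 hg'0 using hg'ex
  have hg'inj : Function.Injective g'0 := by
    intro a b hab
    apply hτinj
    have h1 : π' * τ a * π'⁻¹ = π' * τ b * π'⁻¹ := by rw [hg'0 a, hg'0 b, hab]
    have h2 : π' * τ a = π' * τ b := mul_right_cancel h1
    exact mul_left_cancel h2
  let g' : Equiv.Perm (Fin k) := Equiv.ofBijective g'0 (Finite.injective_iff_bijective.1 hg'inj)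
  have hg'conj : ∀ i, π' * τ i * π'⁻¹ = τ (g' i) := fun i => hg'0 i
  obtain ⟨u0, hu0⟩ := isConj_iff.1 hconj
  have hordπ' : orderOf π' = orderOf π := by
    have hsc : SemiconjBy u0 π π' := by
      rw [SemiconjBy, ← hu0]
      group
    exact (hsc.orderOf_eq u0).symm
  have hcop' : Nat.Coprime d (orderOf π') := by rw [hordπ']; exact hcop
  have hCTπ' : π'.cycleType = Multiset.replicate d m := by
    rw [← Equiv.Perm.isConj_iff_cycleType_eq.1 hconj]
    exact hCTπ
  have hpg' : ∀ i, g' i ≠ i → Function.minimalPeriod ⇑g' i = m := by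
    intro i hi
    obtain ⟨x, hx⟩ := Finset.card_pos.1 (show 0 < (τ i).support.card by rw [hlen]; omega)
    set p := Function.minimalPeriod ⇑g' i with hpdef
    have hpiff : ∀ j : ℕ, ((π' ^ j) x = x ↔ p ∣ j) := by
      intro j
      rw [hC1 π' g' hg'conj hcop' i x hx j, perm_pow_eq_iff_minper_dvd]
    have hppos : 0 < p := perm_minper_pos g' i
    have hp1 : p ≠ 1 := by
      intro h1
      apply hi
      have h2 : (g' ^ 1) i = i := by
        rw [perm_pow_eq_iff_minper_dvd, ← hpdef, h1]
      simpa using h2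
    have hπ'x : π' x ≠ x := by
      intro h0
      have h1 : p ∣ 1 := (hpiff 1).1 (by simpa using h0)
      have := Nat.le_of_dvd one_pos h1
      omega
    have hcard : (π'.cycleOf x).support.card = p :=
      support_cycleOf_card_eq π' x p (by omega) hpiff
    have hmem := card_cycleOf_mem_cycleType π' hπ'x
    rw [hcard, hCTπ'] at hmem
    exact Multiset.eq_of_mem_replicate hmem
  have hsuppπ' : π'.support = g'.support.biUnion (fun i => (τ i).support) := by
    ext x
    obtain ⟨i, hxi⟩ := hcover x
    constructor
    · intro hxs
      have hi : g' i ≠ i := by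
        intro h0
        exact Equiv.Perm.mem_support.1 hxs
          (hfixcyc π' hcop' i (by rw [hg'conj i, h0]) x hxi)
      exact Finset.mem_biUnion.2 ⟨i, Equiv.Perm.mem_support.2 hi, hxi⟩
    · intro hxB
      obtain ⟨j, hjS, hxj⟩ := Finset.mem_biUnion.1 hxB
      have hji : j = i := huniq hxj hxi
      rw [Equiv.Perm.mem_support]
      intro h0
      have h1 : (g' ^ 1) i = i := (hC1 π' g' hg'conj hcop' i x hxi 1).1 (by simpa using h0)
      exact Equiv.Perm.mem_support.1 hjS (by rw [hji]; simpa using h1)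
  have hS' : g'.support.card = m := by
    have h1 := Equiv.Perm.sum_cycleType π'
    rw [hCTπ', Multiset.sum_replicate, smul_eq_mul, hsuppπ',
      Finset.card_biUnion (fun a _ b _ hab => (hdisj a b hab).disjoint_support),
      Finset.sum_congr rfl (fun i _ => hlen i), Finset.sum_const, smul_eq_mul] at h1
    have h2 : g'.support.card * d = m * d := by
      rw [← h1]
      exact Nat.mul_comm d m
    exact Nat.eq_of_mul_eq_mul_right (show 0 < d by omega) h2
  obtain ⟨-, hCTσπ'⟩ := key π' g' hπ'mem.1 hg'conj hcop' hpg' hS'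
  have hconj2 : IsConj (σ * π) (σ * π') :=
    Equiv.Perm.isConj_iff_cycleType_eq.2 (by rw [hCTσπ, hCTσπ'])
  obtain ⟨u, hu⟩ := isConj_iff.1 hconj2
  -- chinese remainder juggling
  have hσd : σ ^ d = 1 := by
    apply Equiv.ext
    intro x
    obtain ⟨i, hxi⟩ := hcover x
    rw [Equiv.Perm.one_apply, hσpow i x hxi d]
    exact (htau_iff i x hxi d).2 dvd_rfl
  have hordσ : orderOf σ ∣ d := orderOf_dvd_of_pow_eq_one hσd
  obtain ⟨e, he1, he2⟩ := Nat.chineseRemainder hcop 1 0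
  obtain ⟨f0, hf1, hf2⟩ := Nat.chineseRemainder hcop 0 1
  have hσe : σ ^ e = σ := by
    have h1 : e ≡ 1 [MOD orderOf σ] := he1.of_dvd hordσ
    calc σ ^ e = σ ^ 1 := pow_eq_pow_iff_modEq.2 h1
    _ = σ := pow_one σ
  have hσf : σ ^ f0 = 1 := by
    have h1 : f0 ≡ 0 [MOD orderOf σ] := hf1.of_dvd hordσ
    calc σ ^ f0 = σ ^ 0 := pow_eq_pow_iff_modEq.2 h1
    _ = 1 := pow_zero σ
  have hπe : π ^ e = 1 := by
    calc π ^ e = π ^ 0 := pow_eq_pow_iff_modEq.2 he2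
    _ = 1 := pow_zero π
  have hπf : π ^ f0 = π := by
    calc π ^ f0 = π ^ 1 := pow_eq_pow_iff_modEq.2 hf2
    _ = π := pow_one π
  have hπ'e : π' ^ e = 1 := by
    have h1 : e ≡ 0 [MOD orderOf π'] := by rw [hordπ']; exact he2
    calc π' ^ e = π' ^ 0 := pow_eq_pow_iff_modEq.2 h1
    _ = 1 := pow_zero π'
  have hπ'f : π' ^ f0 = π' := by
    have h1 : f0 ≡ 1 [MOD orderOf π'] := by rw [hordπ']; exact hf2
    calc π' ^ f0 = π' ^ 1 := pow_eq_pow_iff_modEq.2 h1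
    _ = π' := pow_one π'
  have hσπe : (σ * π) ^ e = σ := by rw [hπmem.1.symm.mul_pow, hσe, hπe, mul_one]
  have hσπ'e : (σ * π') ^ e = σ := by rw [hπ'mem.1.symm.mul_pow, hσe, hπ'e, mul_one]
  have hσπf : (σ * π) ^ f0 = π := by rw [hπmem.1.symm.mul_pow, hσf, hπf, one_mul]
  have hσπ'f : (σ * π') ^ f0 = π' := by rw [hπ'mem.1.symm.mul_pow, hσf, hπ'f, one_mul]
  have huσ : u * σ * u⁻¹ = σ := by
    calc u * σ * u⁻¹ = u * (σ * π) ^ e * u⁻¹ := by rw [hσπe]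
    _ = (u * (σ * π) * u⁻¹) ^ e := conj_pow.symm
    _ = (σ * π') ^ e := by rw [hu]
    _ = σ := hσπ'e
  have huπ : u * π * u⁻¹ = π' := by
    calc u * π * u⁻¹ = u * (σ * π) ^ f0 * u⁻¹ := by rw [hσπf]
    _ = (u * (σ * π) * u⁻¹) ^ f0 := conj_pow.symm
    _ = (σ * π') ^ f0 := by rw [hu]
    _ = π' := hσπ'f
  have hucomm : Commute u σ := by
    have h := huσ
    rw [mul_inv_eq_iff_eq_mul] at h
    exact h
  exact ⟨u, ⟨hucomm, fun x _ => Equiv.Perm.mem_support.2 (hfix x)⟩, huπ⟩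
end

section
/- Let σ = τ₁τ₂⋯τ_k ∈ S_n be a product of k pairwise disjoint transpositions (i.e. cycles of length d = 2) with Fix(σ) = ∅, and let π, π' ∈ Cent₀(σ) be such that the image of π under the induced homomorphism Cent₀(σ) → Cent₀(σ)/K ≅ S_k is a single m-cycle. If π and π' are conjugate in S_n and their images under Cent₀(σ)/K have the same cycle type in S_k, then π and π' are conjugate in Cent₀(σ). -/
open Equiv Equiv.Perm Finset

/-!
Label the two points moved by `τᵢ` as `(i, 0)` and `(i, 1)`, so that `σ` becomes
`(i, c) ↦ (i, c + 1)` on `Fin k × ZMod 2`. Then `Cent₀(σ)` is the wreath product `ZMod 2 ≀ S_k`,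
acting by `(i, c) ↦ (g i, c + δ i)`, and `π`, `π'` become pairs `(g, δ)`, `(g', δ')`.

For an `m`-cycle `g`, the support sizes of `π` and `π ^ m`, both invariant under conjugation in
`S_n`, determine how many fixed points of `g` carry `δ = 1` and whether `δ` sums to `0` along the
cycle. The first lets us conjugate `g` to `g'` by some `θ` with `δ' ∘ θ = δ` on the fixed points
of `g`; the second makes `δ' ∘ θ - δ` sum to `0` along the cycle, so it is a coboundary
`ε ∘ g - ε`, and `(θ, ε)` conjugates `(g, δ)` to `(g', δ')` inside the wreath product.
-/

lemma ZMod.eq_zero_or_eq_one (c : ZMod 2) : c = 0 ∨ c = 1 := by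
  decide +revert

section Wreath

variable {α A : Type*}

def wreathPerm [AddGroup A] (g : Perm α) (δ : α → A) : Perm (α × A) :=
  Equiv.prodShear g fun i => Equiv.addRight (δ i)

@[simp]
lemma wreathPerm_apply [AddGroup A] (g : Perm α) (δ : α → A) (x : α × A) :
    wreathPerm g δ x = (g x.1, x.2 + δ x.1) := rfl

lemma wreathPerm_mul [AddGroup A] (g h : Perm α) (δ η : α → A) :
    wreathPerm g δ * wreathPerm h η = wreathPerm (g * h) fun i => η i + δ (h i) := by
  ext ⟨i, c⟩ <;> simp [add_assoc]

lemma wreathPerm_pow [AddCommGroup A] (g : Perm α) (δ : α → A) (m : ℕ) :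
    wreathPerm g δ ^ m = wreathPerm (g ^ m) fun i => ∑ j ∈ range m, δ ((g ^ j) i) := by
  induction m with
  | zero => ext <;> simp
  | succ m ih =>
    rw [pow_succ, ih, wreathPerm_mul, ← pow_succ]
    congr 1
    funext i
    rw [sum_range_succ', add_comm]
    simp [pow_succ, Perm.mul_apply]

lemma commute_wreathPerm_one [AddCommGroup A] (g : Perm α) (δ : α → A) (c : A) :
    Commute (wreathPerm g δ) (wreathPerm 1 fun _ => c) := by
  ext ⟨i, d⟩ <;> simp [add_right_comm]

lemma card_support_wreathPerm [AddGroup A] [Fintype α] [DecidableEq α] [Fintype A]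
    [DecidableEq A] (g : Perm α) (δ : α → A) :
    #(wreathPerm g δ).support = Fintype.card A * #{i | g i ≠ i ∨ δ i ≠ 0} := by
  have : (wreathPerm g δ).support =
      ({i | g i ≠ i ∨ δ i ≠ 0} : Finset α) ×ˢ (univ : Finset A) := by
    ext ⟨i, c⟩
    simp [or_iff_not_imp_left]
  rw [this, card_product, card_univ, mul_comm]

lemma eq_wreathPerm_of_commute {p : Perm (α × ZMod 2)} {g : Perm α}
    (hp : Commute p (wreathPerm 1 fun _ => 1)) (hg : ∀ x, (p x).1 = g x.1) :
    p = wreathPerm g fun i => (p (i, 0)).2 := by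
  ext ⟨i, c⟩
  · simp [hg]
  · obtain rfl | rfl := ZMod.eq_zero_or_eq_one c
    · simp
    · have := congr($hp.eq (i, 0))
      simp only [Perm.mul_apply, wreathPerm_apply, Perm.one_apply, zero_add] at this
      simp [this, add_comm]

end Wreath

namespace Equiv.Perm.IsCycle

variable {α : Type*} [Fintype α] [DecidableEq α] {g : Perm α} {x : α}

lemma pow_apply_eq_pow_apply_iff (hg : g.IsCycle) (hx : g x ≠ x) {a b : ℕ} :
    (g ^ a) x = (g ^ b) x ↔ a ≡ b [MOD #g.support] := by
  rw [← hg.orderOf, ← pow_eq_pow_iff_modEq]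
  exact ⟨fun h => hg.pow_eq_pow_iff.mpr ⟨x, hx, h⟩, fun h => by rw [h]⟩

lemma sum_range_pow_apply {M : Type*} [AddCommMonoid M] (hg : g.IsCycle) (hx : g x ≠ x)
    (w : α → M) : ∑ l ∈ range #g.support, w ((g ^ l) x) = ∑ y ∈ g.support, w y := by
  have hpos : 0 < #g.support := card_pos.mpr ⟨x, mem_support.mpr hx⟩
  refine sum_nbij (fun l => (g ^ l) x) (fun l _ => pow_apply_mem_support.mpr (mem_support.mpr hx))
    (fun a ha b hb hab => ?_) (fun y hy => ?_) (fun _ _ => rfl)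
  · exact ((hg.pow_apply_eq_pow_apply_iff hx).mp hab).eq_of_lt_of_lt
      (mem_range.mp ha) (mem_range.mp hb)
  · obtain ⟨a, rfl⟩ := hg.exists_pow_eq hx (mem_support.mp hy)
    exact ⟨a % #g.support, mem_range.mpr (Nat.mod_lt a hpos),
      (hg.pow_apply_eq_pow_apply_iff hx).mpr (Nat.mod_modEq a _)⟩

lemma exists_coboundary {A : Type*} [AddCommGroup A] (hg : g.IsCycle) (w : α → A)
    (hw : ∀ i, g i = i → w i = 0) (hsum : ∑ i ∈ g.support, w i = 0) :
    ∃ ε : α → A, ∀ i, ε (g i) = ε i + w i := by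
  classical
  obtain ⟨x, hx, -⟩ := id hg
  set u : ℕ → A := fun a => ∑ l ∈ range a, w ((g ^ l) x)
  have hu : Function.Periodic u #g.support := fun a => by
    simp only [u, sum_range_add, add_eq_left]
    simp_rw [add_comm a, pow_add, Perm.mul_apply]
    have hax : g ((g ^ a) x) ≠ (g ^ a) x :=
      mem_support.mp (pow_apply_mem_support.mpr (mem_support.mpr hx))
    rwa [hg.sum_range_pow_apply hax]
  have hu_eq : ∀ a b, (g ^ a) x = (g ^ b) x → u a = u b := fun a b h => by
    rw [← hu.map_mod_nat a, ← hu.map_mod_nat b, (hg.pow_apply_eq_pow_apply_iff hx).mp h]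
  refine ⟨fun i => if h : ∃ a, (g ^ a) x = i then u h.choose else 0, fun i => ?_⟩
  by_cases hi : g i = i
  · rw [hi, hw i hi, add_zero]
  obtain ⟨a, rfl⟩ := hg.exists_pow_eq hx hi
  have hidx : ∃ b, (g ^ b) x = (g ^ a) x := ⟨a, rfl⟩
  have hidx_succ : ∃ b, (g ^ b) x = g ((g ^ a) x) := ⟨a + 1, by rw [pow_succ', Perm.mul_apply]⟩
  dsimp only
  rw [dif_pos hidx, dif_pos hidx_succ, hu_eq _ (a + 1) (hidx_succ.choose_spec.trans ?_),
    hu_eq _ a hidx.choose_spec]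
  · simp [u, sum_range_succ]
  · rw [pow_succ', Perm.mul_apply]

end Equiv.Perm.IsCycle

section Invariants

variable {α : Type*} [Fintype α] [DecidableEq α]

lemma wreathPerm_pow_card_support {A : Type*} [AddCommGroup A] {g : Perm α} (hg : g.IsCycle)
    (δ : α → A) : wreathPerm g δ ^ #g.support =
      wreathPerm 1 fun i => if g i = i then #g.support • δ i else ∑ j ∈ g.support, δ j := by
  rw [wreathPerm_pow, ← hg.orderOf, pow_orderOf_eq_one, hg.orderOf]
  congr 1
  funext i
  split_ifs with hi
  · simp [pow_apply_eq_self_of_apply_eq_self hi]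
  · exact hg.sum_range_pow_apply hi δ

lemma card_filter_ite_ne_zero {A : Type*} [Zero A] [DecidableEq A] (g : Perm α) (v : α → A)
    (s : A) : #{i | (if g i = i then v i else s) ≠ 0} =
      #{i | g i = i ∧ v i ≠ 0} + if s = 0 then 0 else #g.support := by
  rw [← card_filter_add_card_filter_not (fun i => g i = i), filter_filter, filter_filter]
  congr 1
  · congr 1; ext i; by_cases hi : g i = i <;> simp [hi]
  · split_ifs with hs
    · rw [card_eq_zero, filter_eq_empty_iff]
      intro i _
      by_cases hi : g i = i <;> simp [hi, hs]
    · congr 1; ext i; by_cases hi : g i = i <;> simp [hi, hs]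

lemma card_filter_fixed_zero_add (g : Perm α) (δ : α → ZMod 2) :
    #{i | g i = i ∧ δ i = 0} + #{i | g i ≠ i ∨ δ i ≠ 0} = Fintype.card α := by
  have := card_filter_add_card_filter_not (s := univ) (fun i => g i ≠ i ∨ δ i ≠ 0)
  simp only [not_or, not_not, card_univ] at this
  omega

lemma card_filter_fixed_one_add (g : Perm α) (δ : α → ZMod 2) :
    #{i | g i = i ∧ δ i = 1} + #g.support = #{i | g i ≠ i ∨ δ i ≠ 0} := by
  rw [← card_filter_add_card_filter_not (s := {i | g i ≠ i ∨ δ i ≠ 0}) (fun i => g i = i),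
    filter_filter, filter_filter]
  congr 1
  · congr 1; ext i
    rcases ZMod.eq_zero_or_eq_one (δ i) with h | h <;> simp [h]
  · congr 1; ext i; simp +contextual

lemma card_filter_fixed_nsmul_ne_zero (g : Perm α) (δ : α → ZMod 2) (m : ℕ) :
    #{i | g i = i ∧ m • δ i ≠ 0} =
      if (m : ZMod 2) = 0 then 0 else #{i | g i = i ∧ δ i = 1} := by
  rcases ZMod.eq_zero_or_eq_one (m : ZMod 2) with h | h
  · simp [nsmul_eq_mul, h]
  · simp only [nsmul_eq_mul, h, one_mul, one_ne_zero, if_false]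
    congr 1; ext i
    rcases ZMod.eq_zero_or_eq_one (δ i) with h | h <;> simp [h]

lemma card_fiber_eq_and_sum_eq_of_isConj {g g' : Perm α} {δ δ' : α → ZMod 2} (hg : g.IsCycle)
    (hg' : g'.IsCycle) (hm : #g.support = #g'.support)
    (h : IsConj (wreathPerm g δ) (wreathPerm g' δ')) :
    (∀ b, #{i | g i = i ∧ δ i = b} = #{i | g' i = i ∧ δ' i = b}) ∧
      ∑ i ∈ g.support, δ i = ∑ i ∈ g'.support, δ' i := by
  have card_support_eq {p q : Perm (α × ZMod 2)} (h : IsConj p q) : #p.support = #q.support := by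
    rw [← sum_cycleType, ← sum_cycleType, isConj_iff_cycleType_eq.mp h]
  have hU := card_support_eq h
  simp only [card_support_wreathPerm, ZMod.card] at hU
  have hfib (b : ZMod 2) : #{i | g i = i ∧ δ i = b} = #{i | g' i = i ∧ δ' i = b} := by
    have := card_filter_fixed_zero_add g δ
    have := card_filter_fixed_zero_add g' δ'
    have := card_filter_fixed_one_add g δ
    have := card_filter_fixed_one_add g' δ'
    rcases ZMod.eq_zero_or_eq_one b with rfl | rfl <;> omega
  refine ⟨hfib, ?_⟩
  have hpow := card_support_eq (h.pow #g.support)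
  rw [wreathPerm_pow_card_support hg, hm, wreathPerm_pow_card_support hg'] at hpow
  simp only [card_support_wreathPerm, ZMod.card, Perm.one_apply, ne_self_iff_false, false_or,
    card_filter_ite_ne_zero, card_filter_fixed_nsmul_ne_zero, hm, hfib] at hpow
  have hpos : 0 < #g'.support := card_pos.mpr hg'.nonempty_support
  rcases ZMod.eq_zero_or_eq_one (∑ i ∈ g.support, δ i) with h | h <;>
    rcases ZMod.eq_zero_or_eq_one (∑ i ∈ g'.support, δ' i) with h' | h' <;>
    simp only [h, h', ↓reduceIte, one_ne_zero] at hpow ⊢ <;> omega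

end Invariants

section Intertwiner

variable {α : Type*} [Fintype α] [DecidableEq α]

lemma exists_semiconjBy_eq_on_fixed {β : Type*} [DecidableEq β] {g g' θ₀ : Perm α}
    (hθ₀ : SemiconjBy θ₀ g g') {δ δ' : α → β}
    (hfib : ∀ b, #{i | g i = i ∧ δ i = b} = #{i | g' i = i ∧ δ' i = b}) :
    ∃ θ : Perm α, SemiconjBy θ g g' ∧ ∀ i, g i = i → δ' (θ i) = δ i := by
  have hθ₀i (i : α) : θ₀ (g i) = g' (θ₀ i) := congr($hθ₀.eq i)
  have hcard (b : β) : Fintype.card {x : {i // g i = i} // δ x = b} =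
      Fintype.card {y : {i // g' i = i} // δ' y = b} := by
    rw [Fintype.card_congr (subtypeSubtypeEquivSubtypeInter (fun i => g i = i) (δ · = b)),
      Fintype.card_congr (subtypeSubtypeEquivSubtypeInter (fun i => g' i = i) (δ' · = b)),
      Fintype.card_subtype, Fintype.card_subtype]
    exact hfib b
  obtain ⟨eFix, heFix⟩ : ∃ e : {i // g i = i} ≃ {i // g' i = i}, ∀ x, δ' (e x) = δ x :=
    ⟨ofFiberEquiv fun b => Fintype.equivOfCardEq (hcard b),
      ofFiberEquiv_map (f := fun x : {i // g i = i} => δ x)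
        (g := fun y : {i // g' i = i} => δ' y) _⟩
  let eMov : {i // ¬g i = i} ≃ {i // ¬g' i = i} :=
    θ₀.subtypeEquiv fun i => by rw [← hθ₀i, θ₀.injective.eq_iff]
  have hfix {i : α} (hi : g i = i) : eFix.subtypeCongr eMov i = eFix ⟨i, hi⟩ := by
    simp [Equiv.subtypeCongr, hi]
  have hmov {i : α} (hi : ¬g i = i) : eFix.subtypeCongr eMov i = θ₀ i := by
    simp [Equiv.subtypeCongr, hi, eMov]
  refine ⟨eFix.subtypeCongr eMov, ?_, fun i hi => ?_⟩
  · ext i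
    rw [Perm.mul_apply, Perm.mul_apply]
    by_cases hi : g i = i
    · rw [hi, hfix hi, (eFix ⟨i, hi⟩).2]
    · have hgi : ¬g (g i) = g i := fun h => hi (g.injective h)
      rw [hmov hi, hmov hgi, hθ₀i]
  · rw [hfix hi, heFix]

end Intertwiner

section Conjugacy

variable {α : Type*} [Fintype α] [DecidableEq α]

lemma exists_semiconjBy_wreathPerm {A : Type*} [AddCommGroup A] {g g' θ : Perm α}
    (hg : g.IsCycle) (hθ : SemiconjBy θ g g') {δ δ' : α → A}
    (hfix : ∀ i, g i = i → δ' (θ i) = δ i)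
    (hsum : ∑ i ∈ g.support, δ i = ∑ i ∈ g'.support, δ' i) :
    ∃ ε, SemiconjBy (wreathPerm θ ε) (wreathPerm g δ) (wreathPerm g' δ') := by
  have hθi (i : α) : θ (g i) = g' (θ i) := congr($hθ.eq i)
  have hsum' : ∑ i ∈ g.support, δ' (θ i) = ∑ i ∈ g'.support, δ' i :=
    sum_equiv θ (fun i => by simp [← hθi, θ.injective.ne_iff]) fun _ _ => rfl
  obtain ⟨ε, hε⟩ := hg.exists_coboundary (fun i => δ' (θ i) - δ i)
    (fun i hi => by rw [hfix i hi, sub_self]) (by rw [sum_sub_distrib, hsum', hsum, sub_self])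
  refine ⟨ε, ?_⟩
  rw [SemiconjBy, wreathPerm_mul, wreathPerm_mul, hθ.eq]
  congr 1
  funext i
  rw [hε]
  abel

theorem exists_semiconjBy_wreathPerm_of_isConj {g g' : Perm α} {δ δ' : α → ZMod 2}
    (hg : g.IsCycle) (hgg' : IsConj g g') (h : IsConj (wreathPerm g δ) (wreathPerm g' δ')) :
    ∃ θ ε, SemiconjBy (wreathPerm θ ε) (wreathPerm g δ) (wreathPerm g' δ') := by
  obtain ⟨θ₀, rfl⟩ := isConj_iff.mp hgg'
  obtain ⟨hfib, hsum⟩ :=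
    card_fiber_eq_and_sum_eq_of_isConj hg hg.conj card_support_conj.symm h
  obtain ⟨θ, hθ, hfix⟩ := exists_semiconjBy_eq_on_fixed (SemiconjBy.conj_mk θ₀ g) hfib
  exact ⟨θ, exists_semiconjBy_wreathPerm hg hθ hfix hsum⟩

end Conjugacy

section Labelling

variable {α : Type*} {k : ℕ} {σ : Perm α} {τ : Fin k → Perm α}

lemma permCongrHom_symm_eq_wreathPerm_one {φ : Fin k × ZMod 2 ≃ α}
    (hφσ : ∀ i c, σ (φ (i, c)) = φ (i, c + 1)) :
    φ.symm.permCongrHom σ = wreathPerm 1 fun _ => 1 := by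
  ext ⟨i, c⟩ : 1
  simp [permCongrHom_coe, permCongr_apply, hφσ]

variable [Fintype α] [DecidableEq α]

lemma eq_of_mem_support_of_mem_support (hdisj : ∀ i j, i ≠ j → (τ i).Disjoint (τ j))
    {i j : Fin k} {x : α} (hi : x ∈ (τ i).support) (hj : x ∈ (τ j).support) : i = j := by
  by_contra hij
  exact disjoint_left.mp (hdisj i j hij).disjoint_support hi hj

lemma exists_prod_zmod_two_equiv (hlen : ∀ i, #(τ i).support = 2)
    (hdisj : ∀ i j, i ≠ j → (τ i).Disjoint (τ j)) (hσ : σ = (List.ofFn τ).prod)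
    (hfix : ∀ x, σ x ≠ x) :
    ∃ φ : Fin k × ZMod 2 ≃ α,
      (∀ i c, φ (i, c) ∈ (τ i).support) ∧ ∀ i c, σ (φ (i, c)) = φ (i, c + 1) := by
  have hpair : (List.ofFn τ).Pairwise Disjoint :=
    List.pairwise_ofFn.mpr fun i j hij => hdisj i j hij.ne
  have hagree (i : Fin k) (x : α) (hx : x ∈ (τ i).support) : σ x = τ i x := by
    rw [hσ]
    exact (eq_on_support_mem_disjoint (List.mem_ofFn.mpr ⟨i, rfl⟩) hpair x hx).symm
  choose a b hab hτ using fun i => card_support_eq_two.mp (hlen i)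
  have hsupp (i : Fin k) : (τ i).support = {a i, b i} := by rw [hτ, support_swap (hab i)]
  let φ (p : Fin k × ZMod 2) : α := if p.2 = 0 then a p.1 else b p.1
  have hmem (i : Fin k) (c : ZMod 2) : φ (i, c) ∈ (τ i).support := by
    rcases ZMod.eq_zero_or_eq_one c with rfl | rfl <;> simp [φ, hsupp]
  have hinj : φ.Injective := by
    rintro ⟨i, c⟩ ⟨j, d⟩ h
    obtain rfl := eq_of_mem_support_of_mem_support hdisj (hmem i c) (h ▸ hmem j d)
    rcases ZMod.eq_zero_or_eq_one c with rfl | rfl <;>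
      rcases ZMod.eq_zero_or_eq_one d with rfl | rfl <;> simp_all [φ, (hab i).symm]
  have hsurj : φ.Surjective := by
    intro x
    obtain ⟨f, hf, hx⟩ :=
      exists_mem_support_of_mem_support_prod (hσ ▸ mem_support.mpr (hfix x))
    obtain ⟨i, rfl⟩ := List.mem_ofFn.mp hf
    rw [hsupp, mem_insert, mem_singleton] at hx
    rcases hx with rfl | rfl
    · exact ⟨(i, 0), by simp [φ]⟩
    · exact ⟨(i, 1), by simp [φ]⟩
  refine ⟨Equiv.ofBijective φ ⟨hinj, hsurj⟩, hmem, fun i c => ?_⟩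
  show σ (φ (i, c)) = φ (i, c + 1)
  rw [hagree i _ (hmem i c)]
  rcases ZMod.eq_zero_or_eq_one c with rfl | rfl <;>
    simp [φ, hτ, show (1 + 1 : ZMod 2) = 0 from rfl]

lemma exists_permCongrHom_symm_eq_wreathPerm {φ : Fin k × ZMod 2 ≃ α}
    (hdisj : ∀ i j, i ≠ j → (τ i).Disjoint (τ j))
    (hφτ : ∀ i c, φ (i, c) ∈ (τ i).support) (hφσ : ∀ i c, σ (φ (i, c)) = φ (i, c + 1))
    {π : Perm α} {g : Perm (Fin k)} (hπ : Commute π σ) (hg : ∀ i, π * τ i * π⁻¹ = τ (g i)) :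
    ∃ δ, φ.symm.permCongrHom π = wreathPerm g δ := by
  refine ⟨_, eq_wreathPerm_of_commute ?_ fun ⟨i, c⟩ => ?_⟩
  · rw [← permCongrHom_symm_eq_wreathPerm_one hφσ]
    exact hπ.map _
  · have hπφ : π (φ (i, c)) ∈ (τ (g i)).support := by
      rw [← hg, support_conj]
      exact mem_map_of_mem _ (hφτ i c)
    have hφφ := hφτ (φ.symm (π (φ (i, c)))).1 (φ.symm (π (φ (i, c)))).2
    simp only [Prod.mk.eta, apply_symm_apply] at hφφ
    exact eq_of_mem_support_of_mem_support hdisj hφφ hπφ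

end Labelling

theorem conjugate_in_cent0_of_transpositions_general
    {n k : ℕ} (σ : Equiv.Perm (Fin n)) (τ : Fin k → Equiv.Perm (Fin n))
    (hlen : ∀ i, (τ i).support.card = 2)
    (hdisj : ∀ i j, i ≠ j → Equiv.Perm.Disjoint (τ i) (τ j))
    (hσ : σ = (List.ofFn τ).prod)
    (hfix : ∀ x : Fin n, σ x ≠ x)
    (π π' : Equiv.Perm (Fin n)) (hπmem : π ∈ Cent0 σ) (hπ'mem : π' ∈ Cent0 σ)
    -- the images of `π` and `π'` under `Cent₀(σ) → S_k`
    (g g' : Equiv.Perm (Fin k))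
    (hgconj : ∀ i, π * τ i * π⁻¹ = τ (g i))
    (hg'conj : ∀ i, π' * τ i * π'⁻¹ = τ (g' i))
    -- the image of `π` is a single `m`-cycle
    (hgcycle : g.IsCycle)
    -- `π, π'` conjugate in `S_n` with images of equal cycle type
    (hconj : IsConj π π')
    (hct : g.cycleType = g'.cycleType) :
    ∃ ρ ∈ Cent0 σ, ρ * π * ρ⁻¹ = π' := by
  obtain ⟨φ, hφτ, hφσ⟩ := exists_prod_zmod_two_equiv hlen hdisj hσ hfix
  set P := φ.symm.permCongrHom
  obtain ⟨δ, hδ⟩ := exists_permCongrHom_symm_eq_wreathPerm hdisj hφτ hφσ hπmem.1 hgconj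
  obtain ⟨δ', hδ'⟩ := exists_permCongrHom_symm_eq_wreathPerm hdisj hφτ hφσ hπ'mem.1 hg'conj
  obtain ⟨θ, ε, hθε⟩ := exists_semiconjBy_wreathPerm_of_isConj hgcycle
    (isConj_iff_cycleType_eq.mpr hct) (hδ ▸ hδ' ▸ P.toMonoidHom.map_isConj hconj)
  refine ⟨P.symm (wreathPerm θ ε), ⟨?_, fun x _ => mem_support.mpr (hfix x)⟩, ?_⟩
  · rw [← P.symm_apply_apply σ, permCongrHom_symm_eq_wreathPerm_one hφσ]
    exact (commute_wreathPerm_one θ ε 1).map P.symm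
  · apply P.injective
    rw [map_mul, map_mul, map_inv, P.apply_symm_apply, hδ, hδ', hθε.eq, mul_inv_cancel_right]

/-- `σ = τ₁⋯τ_k` is a product of `k` pairwise disjoint transpositions
(`d = 2`) without fixed points, `π, π' ∈ Cent₀(σ)`, and the image of `π` under the
induced map `Cent₀(σ) → S_k` is a single `m`-cycle.  If `π, π'` are conjugate in `S_n`
and their images under `Cent₀(σ)/K` have the same cycle type in `S_k`, then `π` and
`π'` are conjugate in `Cent₀(σ)`. -/
theorem conjugate_in_cent0_of_transpositions
    {n k m : ℕ} (σ : Equiv.Perm (Fin n)) (τ : Fin k → Equiv.Perm (Fin n))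
    (hcyc : ∀ i, (τ i).IsCycle) (hlen : ∀ i, (τ i).support.card = 2)
    (hdisj : ∀ i j, i ≠ j → Equiv.Perm.Disjoint (τ i) (τ j))
    (hσ : σ = (List.ofFn τ).prod)
    (hfix : ∀ x : Fin n, σ x ≠ x)
    (π π' : Equiv.Perm (Fin n)) (hπmem : π ∈ Cent0 σ) (hπ'mem : π' ∈ Cent0 σ)
    -- the images of `π` and `π'` under `Cent₀(σ) → S_k`
    (g g' : Equiv.Perm (Fin k))
    (hgconj : ∀ i, π * τ i * π⁻¹ = τ (g i))
    (hg'conj : ∀ i, π' * τ i * π'⁻¹ = τ (g' i))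
    -- the image of `π` is a single `m`-cycle
    (hgcycle : g.IsCycle) (hgcard : g.support.card = m)
    -- `π, π'` conjugate in `S_n` with images of equal cycle type
    (hconj : IsConj π π')
    (hct : g.cycleType = g'.cycleType) :
    ∃ ρ ∈ Cent0 σ, ρ * π * ρ⁻¹ = π' :=
  conjugate_in_cent0_of_transpositions_general σ τ hlen hdisj hσ hfix π π' hπmem hπ'mem g g' hgconj
    hg'conj hgcycle hconj hct
end

section
/- Let σ = τ₁τ₂⋯τ_k ∈ S_n be a product of k pairwise disjoint cycles of length d with Fix(σ) = ∅. Then the subgroup H_σ = { x ∈ S_{X_σ} : xσx⁻¹ = σ^z for some integer z } acts transitively by conjugation on the set of cycles {τ₁,τ₂,...,τ_k}, and the kernel of the induced homomorphism H_σ → S_k given by this action is K_{H_σ} = { x ∈ H_σ : for every 1 ≤ i ≤ k, xτᵢx⁻¹ = τᵢ^z for some integer z }. -/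
open Equiv Equiv.Perm Finset

/-!
The `τᵢ` are exactly the cycle factors of `σ`. If `xσx⁻¹ = σ^z`, then `x` carries `σ`-orbits
into `σ^z`-orbits, which lie inside `σ`-orbits; so `x` maps the support of each cycle into the
support of a cycle. The centralizer of `σ` induces every length-preserving permutation of its
cycle factors, in particular the transposition of two cycles of equal length, and centralizing
elements lie in `H_σ` because `σ` has no fixed points. If `x ∈ H_σ` preserves the support of
`τᵢ`, then `xτᵢx⁻¹` agrees with `xσx⁻¹ = σ^z`, hence with `τᵢ^z`, on that support, and both
fix its complement.
-/

namespace Equiv.Perm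

variable {α : Type*}

theorem SameCycle.apply_of_conj_eq_zpow {g x : Perm α} {z : ℤ} (h : x * g * x⁻¹ = g ^ z)
    {p q : α} (hpq : g.SameCycle p q) : g.SameCycle (x p) (x q) := by
  have hconj : (x * g * x⁻¹).SameCycle (x p) (x q) := by
    rw [sameCycle_conj]
    simpa only [coe_inv, symm_apply_apply] using hpq
  rw [h] at hconj
  exact hconj.of_zpow

variable [DecidableEq α] [Fintype α]

theorem mem_cycleFactorsFinset_prod_ofFn_iff {k : ℕ} {τ : Fin k → Perm α}
    (hcyc : ∀ i, (τ i).IsCycle) (hdisj : ∀ i j, i ≠ j → Disjoint (τ i) (τ j))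
    {c : Perm α} : c ∈ (List.ofFn τ).prod.cycleFactorsFinset ↔ ∃ i, τ i = c := by
  have hcycles : ∀ f ∈ List.ofFn τ, f.IsCycle := by
    rintro f hf
    obtain ⟨i, rfl⟩ := List.mem_ofFn.1 hf
    exact hcyc i
  have hpair : (List.ofFn τ).Pairwise Disjoint :=
    List.pairwise_ofFn.2 fun i j hij => hdisj i j hij.ne
  have hnodup := nodup_of_pairwise_disjoint (fun h => (hcycles 1 h).ne_one rfl) hpair
  rw [(cycleFactorsFinset_eq_list_toFinset hnodup).2 ⟨hcycles, hpair, rfl⟩, List.mem_toFinset,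
    List.mem_ofFn]

theorem apply_mem_support_of_conj_eq_zpow {x c c' : Perm α} {z : ℤ}
    (h : x * c * x⁻¹ = c' ^ z) {p : α} (hp : p ∈ c.support) : x p ∈ c'.support := by
  have hmoved : (c' ^ z) (x p) ≠ x p := by
    rw [← h]
    simpa using mem_support.1 hp
  exact support_zpow_le c' z (mem_support.2 hmoved)

theorem exists_mem_cycleFactorsFinset_mapsTo_of_conj_eq_zpow {g x c : Perm α} {z : ℤ}
    (h : x * g * x⁻¹ = g ^ z) (hc : c ∈ g.cycleFactorsFinset) :
    ∃ c' ∈ g.cycleFactorsFinset, ∀ p ∈ c.support, x p ∈ c'.support := by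
  obtain ⟨p₀, hp₀⟩ := (mem_cycleFactorsFinset_iff.1 hc).1.nonempty_support
  have hxp₀ : x p₀ ∈ g.support :=
    apply_mem_support_of_conj_eq_zpow h (mem_cycleFactorsFinset_support_le hc hp₀)
  refine ⟨g.cycleOf (x p₀), cycleOf_mem_cycleFactorsFinset_iff.2 hxp₀, fun p hp => ?_⟩
  rw [cycle_is_cycleOf hp₀ hc, mem_support_cycleOf_iff] at hp
  exact mem_support_cycleOf_iff.2 ⟨hp.1.apply_of_conj_eq_zpow h, hxp₀⟩

theorem conj_eq_zpow_of_mapsTo_support {g x c : Perm α} {z : ℤ} (h : x * g * x⁻¹ = g ^ z)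
    (hc : c ∈ g.cycleFactorsFinset) (hx : ∀ p ∈ c.support, x p ∈ c.support) :
    x * c * x⁻¹ = c ^ z := by
  -- `x` permutes the finite set `c.support`, hence also its complement
  have hmap : c.support.map x.toEmbedding = c.support :=
    Finset.map_eq_of_subset fun q hq => by
      obtain ⟨p, hp, rfl⟩ := Finset.mem_map.1 hq
      exact hx p hp
  rw [mul_inv_eq_iff_eq_mul]
  ext p
  simp only [mul_apply]
  by_cases hp : p ∈ c.support
  · have hxp := hx p hp
    calc x (c p) = x (g p) := by rw [(mem_cycleFactorsFinset_iff.1 hc).2 p hp]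
      _ = (g ^ z) (x p) := by rw [← h]; simp
      _ = (c ^ z) (x p) := by rw [cycle_is_cycleOf hxp hc, cycleOf_zpow_apply_self]
  · have hxp : x p ∉ c.support := by
      rwa [← hmap, Finset.mem_map_equiv, symm_apply_apply]
    rw [notMem_support.1 hp, zpow_apply_eq_self_of_apply_eq_self (notMem_support.1 hxp)]

theorem exists_mem_centralizer_conj_eq {g c c' : Perm α} (hc : c ∈ g.cycleFactorsFinset)
    (hc' : c' ∈ g.cycleFactorsFinset) (hcard : c.support.card = c'.support.card) :
    ∃ k ∈ Subgroup.centralizer {g}, k * c * k⁻¹ = c' := by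
  have hswap : swap (⟨c, hc⟩ : g.cycleFactorsFinset) ⟨c', hc'⟩ ∈
      (OnCycleFactors.toPermHom g).range := by
    refine OnCycleFactors.mem_range_toPermHom_iff.2 fun d => ?_
    rw [swap_apply_def]
    split_ifs with h₁ h₂ <;> subst_vars <;> simp only [hcard]
  obtain ⟨k, hk⟩ := hswap
  refine ⟨k, k.prop, ?_⟩
  have := congrArg (fun π => (π ⟨c, hc⟩ : Perm α)) hk
  simpa [OnCycleFactors.coe_toPermHom] using this

end Equiv.Perm

/-- `σ = τ₁⋯τ_k` is a product of `k` pairwise disjoint `d`-cycles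
without fixed points.  The subgroup `H_σ = { x ∈ S_{X_σ} : xσx⁻¹ = σ^z, z ∈ ℤ }`
acts transitively by conjugation on the cycles `{τ₁,…,τ_k}` (each `x ∈ H_σ` maps the
set of points of each cycle to the set of points of some cycle, and any cycle can be
mapped to any other), and the kernel of the induced homomorphism `H_σ → S_k` consists
exactly of those `x ∈ H_σ` with `xτᵢx⁻¹ = τᵢ^z` for some integer `z`, for every `i`. -/
theorem Hgrp_transitive_and_kernel
    {n k d : ℕ} (σ : Equiv.Perm (Fin n)) (τ : Fin k → Equiv.Perm (Fin n))
    (hcyc : ∀ i, (τ i).IsCycle) (hlen : ∀ i, (τ i).support.card = d)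
    (hdisj : ∀ i j, i ≠ j → Equiv.Perm.Disjoint (τ i) (τ j))
    (hσ : σ = (List.ofFn τ).prod)
    (hfix : ∀ x : Fin n, σ x ≠ x) :
    -- the action is well defined: `x ∈ H_σ` sends the points of a cycle to a cycle
    (∀ x ∈ Hgrp σ, ∀ i : Fin k, ∃ j : Fin k,
      ∀ p ∈ (τ i).support, x p ∈ (τ j).support) ∧
    -- transitivity
    (∀ i j : Fin k, ∃ x ∈ Hgrp σ, ∀ p ∈ (τ i).support, x p ∈ (τ j).support) ∧
    -- the kernel of the induced homomorphism `H_σ → S_k`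
    (∀ x ∈ Hgrp σ,
      ((∀ i : Fin k, ∀ p ∈ (τ i).support, x p ∈ (τ i).support) ↔
        (∀ i : Fin k, ∃ z : ℤ, x * τ i * x⁻¹ = τ i ^ z))) := by
  have hfac : ∀ c, c ∈ σ.cycleFactorsFinset ↔ ∃ i, τ i = c := fun c => by
    rw [hσ]
    exact mem_cycleFactorsFinset_prod_ofFn_iff hcyc hdisj
  have hτ : ∀ i, τ i ∈ σ.cycleFactorsFinset := fun i => (hfac _).2 ⟨i, rfl⟩
  refine ⟨?_, ?_, ?_⟩
  · rintro x ⟨-, z, hz⟩ i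
    obtain ⟨c, hc, hmaps⟩ := exists_mem_cycleFactorsFinset_mapsTo_of_conj_eq_zpow hz (hτ i)
    obtain ⟨j, rfl⟩ := (hfac c).1 hc
    exact ⟨j, hmaps⟩
  · intro i j
    obtain ⟨x, hx, hconj⟩ :=
      exists_mem_centralizer_conj_eq (hτ i) (hτ j) (by rw [hlen, hlen])
    have hxσ : x * σ * x⁻¹ = σ ^ (1 : ℤ) := by
      rw [zpow_one, Subgroup.mem_centralizer_singleton_iff.1 hx, mul_inv_cancel_right]
    exact ⟨x, ⟨fun q _ => mem_support.2 (hfix q), 1, hxσ⟩,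
      fun p hp => apply_mem_support_of_conj_eq_zpow (z := 1) (by rw [hconj, zpow_one]) hp⟩
  · rintro x ⟨-, z, hz⟩
    exact ⟨fun h i => ⟨z, conj_eq_zpow_of_mapsTo_support hz (hτ i) (h i)⟩,
      fun h i p hp => (h i).elim fun w hw => apply_mem_support_of_conj_eq_zpow hw hp⟩
end

section
/- Let τ₁ = (1 2 ⋯ d) and τ₂ = (j₁ j₂ ⋯ j_d) be disjoint d-cycles in S_n, and let s₁, s₂ be permutations supported on the union of the supports of τ₁ and τ₂, each a product of pairwise disjoint transpositions, such that s₁τ₁s₁⁻¹ = s₂τ₁s₂⁻¹ = τ₂⁻¹. Then there exists an integer z such that τ₂^z s₁ τ₂^{-z} = s₂. -/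
/-! Conjugation by `s₁` and by `s₂` both exchange `τ₁` with `τ₂⁻¹` (and, the `sᵢ` being
involutions, `τ₂` with `τ₁⁻¹`), so `c = s₂⁻¹ s₁` centralizes the two disjoint cycles; as it lives
on their supports, `c = τ₁ᵏ τ₂ˡ`. Hence `s₁ = τ₂⁻ᵏ s₂ τ₂ˡ`, and `s₁² = 1` unwinds to
`τ₁ᵏ⁻ˡ τ₂ˡ⁻ᵏ = 1`, which by disjointness forces `τ₂ˡ = τ₂ᵏ`: so `z = k` works. -/

open Equiv Equiv.Perm Finset

section Group

variable {G : Type*} [Group G]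

theorem commute_inv_mul_of_conj_eq {a s t : G} (h : s * a * s⁻¹ = t * a * t⁻¹) :
    Commute (t⁻¹ * s) a :=
  calc t⁻¹ * s * a = t⁻¹ * (s * a * s⁻¹) * s := by group
    _ = a * (t⁻¹ * s) := by rw [h]; group

theorem conj_eq_inv_symm_of_sq_eq_one {a b s : G} (hs : s ^ 2 = 1)
    (h : s * a * s⁻¹ = b⁻¹) : s * b * s⁻¹ = a⁻¹ :=
  calc s * b * s⁻¹ = s * (s * a * s⁻¹)⁻¹ * s⁻¹ := by rw [h, inv_inv]
    _ = s ^ 2 * a⁻¹ * (s ^ 2)⁻¹ := by rw [sq]; group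
    _ = a⁻¹ := by rw [hs]; group

end Group

namespace Equiv.Perm

variable {α : Type*}

section Fintype

variable [DecidableEq α] [Fintype α]

theorem IsCycle.exists_zpow_eq_on_support_of_commute {σ c : Perm α} (hσ : σ.IsCycle)
    (hc : Commute c σ) : ∃ k : ℤ, ∀ x ∈ σ.support, c x = (σ ^ k) x := by
  obtain ⟨hinv, k, hk⟩ := hσ.commute_iff.mp hc
  exact ⟨k, fun x hx => by rw [← ofSubtype_subtypePerm_of_mem hinv hx, ← hk]⟩

theorem Disjoint.exists_eq_zpow_mul_zpow_of_commute {σ τ c : Perm α} (hστ : Disjoint σ τ)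
    (hσ : σ.IsCycle) (hτ : τ.IsCycle) (hcσ : Commute c σ) (hcτ : Commute c τ)
    (hc : c.support ⊆ σ.support ∪ τ.support) : ∃ k l : ℤ, c = σ ^ k * τ ^ l := by
  obtain ⟨k, hk⟩ := hσ.exists_zpow_eq_on_support_of_commute hcσ
  obtain ⟨l, hl⟩ := hτ.exists_zpow_eq_on_support_of_commute hcτ
  refine ⟨k, l, ext fun x => ?_⟩
  rw [mul_apply]
  by_cases hxσ : x ∈ σ.support
  · rw [zpow_apply_eq_self_of_apply_eq_self (notMem_support.mp (hστ.mem_imp hxσ)), hk x hxσ]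
  by_cases hxτ : x ∈ τ.support
  · have hcx : c x ∈ τ.support := hl x hxτ ▸ zpow_apply_mem_support.mpr hxτ
    rw [← hl x hxτ, zpow_apply_eq_self_of_apply_eq_self (notMem_support.mp (hστ.symm.mem_imp hcx))]
  have hcx : x ∉ c.support := fun h => by simpa [hxσ, hxτ] using hc h
  rw [notMem_support] at hxσ hxτ hcx
  rw [hcx, zpow_apply_eq_self_of_apply_eq_self hxτ, zpow_apply_eq_self_of_apply_eq_self hxσ]

end Fintype

theorem Disjoint.zpow_conj_eq_of_inv_mul_eq {σ τ s t : Perm α} (hστ : Disjoint σ τ)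
    (hs : s ^ 2 = 1) (ht : t ^ 2 = 1) (htσ : t * σ * t⁻¹ = τ⁻¹) {k l : ℤ}
    (hst : t⁻¹ * s = σ ^ k * τ ^ l) : τ ^ k * s * (τ ^ k)⁻¹ = t := by
  have htτ : ∀ m : ℤ, t * τ ^ m * t⁻¹ = σ ^ (-m) := fun m => by
    rw [← conj_zpow, conj_eq_inv_symm_of_sq_eq_one ht htσ, inv_zpow']
  have hs_eq : s = τ ^ (-k) * t * τ ^ l :=
    calc s = t * (t⁻¹ * s) := by group
      _ = t * σ ^ k * t⁻¹ * t * τ ^ l := by rw [hst]; group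
      _ = τ ^ (-k) * t * τ ^ l := by rw [← conj_zpow, htσ, inv_zpow']
  have hprod : σ ^ (k - l) * τ ^ (l - k) = 1 :=
    calc σ ^ (k - l) * τ ^ (l - k) = τ ^ (-k) * σ ^ (k - l) * τ ^ l := by
          rw [mul_assoc, (hστ.commute.zpow_zpow (k - l) l).eq, ← mul_assoc, ← zpow_add,
            ← (hστ.commute.zpow_zpow (k - l) (-k + l)).eq, neg_add_eq_sub]
      _ = τ ^ (-k) * (t * τ ^ (l - k) * t⁻¹) * (t * t) * τ ^ l := by
          rw [htτ, ← sq, ht]; group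
      _ = s ^ 2 := by rw [hs_eq, sq]; group
      _ = 1 := hs
  have hτlk : τ ^ (l - k) = 1 := ((hστ.zpow_disjoint_zpow _ _).mul_eq_one_iff.mp hprod).2
  calc τ ^ k * s * (τ ^ k)⁻¹ = t * τ ^ (l - k) := by rw [hs_eq]; group
    _ = t := by rw [hτlk, mul_one]

end Equiv.Perm

theorem conj_by_power_of_cycle_two_cycles_general
    {n : ℕ} (τ₁ τ₂ : Equiv.Perm (Fin n))
    (hτ₁ : τ₁.IsCycle)
    (hdisj : Equiv.Perm.Disjoint τ₁ τ₂)
    (s₁ s₂ : Equiv.Perm (Fin n))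
    (hs₁supp : s₁.support ⊆ τ₁.support ∪ τ₂.support)
    (hs₂supp : s₂.support ⊆ τ₁.support ∪ τ₂.support)
    (hs₁inv : s₁ ^ 2 = 1) (hs₂inv : s₂ ^ 2 = 1)
    (hc₁ : s₁ * τ₁ * s₁⁻¹ = τ₂⁻¹) (hc₂ : s₂ * τ₁ * s₂⁻¹ = τ₂⁻¹) :
    ∃ z : ℤ, τ₂ ^ z * s₁ * (τ₂ ^ z)⁻¹ = s₂ := by
  have hτ₂ : τ₂.IsCycle := isCycle_inv.mp (hc₁ ▸ hτ₁.conj)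
  have hcτ₂ : s₁ * τ₂ * s₁⁻¹ = s₂ * τ₂ * s₂⁻¹ := by
    rw [conj_eq_inv_symm_of_sq_eq_one hs₁inv hc₁, conj_eq_inv_symm_of_sq_eq_one hs₂inv hc₂]
  have hsupp : (s₂⁻¹ * s₁).support ⊆ τ₁.support ∪ τ₂.support :=
    (support_mul_le _ _).trans (sup_le (support_inv s₂ ▸ hs₂supp) hs₁supp)
  obtain ⟨k, l, hkl⟩ := hdisj.exists_eq_zpow_mul_zpow_of_commute hτ₁ hτ₂
    (commute_inv_mul_of_conj_eq (hc₁.trans hc₂.symm)) (commute_inv_mul_of_conj_eq hcτ₂) hsupp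
  exact ⟨k, hdisj.zpow_conj_eq_of_inv_mul_eq hs₁inv hs₂inv hc₂ hkl⟩

/-- Let `τ₁` and `τ₂` be disjoint `d`-cycles in `S_n`, and let
`s₁, s₂` be products of pairwise disjoint transpositions (i.e. involutions, possibly
trivial) supported on the union of the supports of `τ₁` and `τ₂` such that
`s₁τ₁s₁⁻¹ = s₂τ₁s₂⁻¹ = τ₂⁻¹`.  Then `τ₂^z s₁ τ₂^{-z} = s₂` for some integer `z`. -/
theorem conj_by_power_of_cycle_two_cycles
    {n d : ℕ} (τ₁ τ₂ : Equiv.Perm (Fin n))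
    (hτ₁ : τ₁.IsCycle) (hτ₂ : τ₂.IsCycle)
    (hl₁ : τ₁.support.card = d) (hl₂ : τ₂.support.card = d)
    (hdisj : Equiv.Perm.Disjoint τ₁ τ₂)
    (s₁ s₂ : Equiv.Perm (Fin n))
    (hs₁supp : s₁.support ⊆ τ₁.support ∪ τ₂.support)
    (hs₂supp : s₂.support ⊆ τ₁.support ∪ τ₂.support)
    (hs₁inv : s₁ ^ 2 = 1) (hs₂inv : s₂ ^ 2 = 1)
    (hc₁ : s₁ * τ₁ * s₁⁻¹ = τ₂⁻¹) (hc₂ : s₂ * τ₁ * s₂⁻¹ = τ₂⁻¹) :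
    ∃ z : ℤ, τ₂ ^ z * s₁ * (τ₂ ^ z)⁻¹ = s₂ :=
  conj_by_power_of_cycle_two_cycles_general τ₁ τ₂ hτ₁ hdisj s₁ s₂ hs₁supp hs₂supp hs₁inv hs₂inv hc₁
    hc₂
end

section
/- Let τ₁ = (1 2 ⋯ d) be a d-cycle in S_n, and let s₁, s₂ be permutations supported on the support of τ₁, each a product of pairwise disjoint transpositions, such that s₁τ₁s₁⁻¹ = s₂τ₁s₂⁻¹ = τ₁⁻¹. If s₁ and s₂ are conjugate in S_n, then there exists an integer z such that τ₁^z s₁ τ₁^{-z} = s₂. -/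
/-!
Both `s₁` and `s₂` invert `τ₁`, so `s₂⁻¹ s₁` commutes with the cycle `τ₁`; being supported on
its support, it is a power `τ₁ ^ k`. Conjugation by `τ₁ ^ z` sends `s₂ τ₁ ^ k` to
`s₂ τ₁ ^ (k - 2z)`, so it suffices to solve `k ≡ 2z` modulo the length `d` of `τ₁`. For `d` odd
this is always possible; for `d` even, `τ₁` is an odd permutation while the conjugate
permutations `s₁ = s₂ τ₁ ^ k` and `s₂` have the same sign, so `k` is even.
-/

open Equiv Equiv.Perm Finset

section ConjugationByPowers

variable {G : Type*} [Group G]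

theorem commute_inv_mul_of_conj_eq_s9 {s₁ s₂ t : G} (h : s₁ * t * s₁⁻¹ = s₂ * t * s₂⁻¹) :
    Commute (s₂⁻¹ * s₁) t := by
  rw [Commute, SemiconjBy, ← mul_inv_eq_iff_eq_mul]
  calc s₂⁻¹ * s₁ * t * (s₂⁻¹ * s₁)⁻¹ = s₂⁻¹ * (s₁ * t * s₁⁻¹) * s₂ := by group
    _ = t := by rw [h]; group

theorem zpow_mul_mul_zpow_inv_of_conj_eq_inv {s t : G} (h : s * t * s⁻¹ = t⁻¹) (k z : ℤ) :
    t ^ z * (s * t ^ k) * (t ^ z)⁻¹ = s * t ^ (k - 2 * z) := by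
  have hinv : t ^ z * s = s * t ^ (-z) := by
    have hsemi : SemiconjBy s t t⁻¹ := mul_inv_eq_iff_eq_mul.mp h
    rw [(hsemi.zpow_right (-z)).eq, inv_zpow', neg_neg]
  calc t ^ z * (s * t ^ k) * (t ^ z)⁻¹ = t ^ z * s * t ^ k * (t ^ z)⁻¹ := by group
    _ = s * t ^ (k - 2 * z) := by rw [hinv]; group

end ConjugationByPowers

theorem exists_dvd_sub_two_mul {m : ℕ} {k : ℤ} (h : Odd m ∨ Even k) :
    ∃ z : ℤ, (m : ℤ) ∣ k - 2 * z := by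
  rcases h with ⟨r, hr⟩ | ⟨r, hr⟩
  · exact ⟨-(r * k), k, by rw [hr]; push_cast; ring⟩
  · exact ⟨r, by rw [hr, ← two_mul, sub_self]; exact dvd_zero _⟩

namespace Equiv.Perm

variable {α : Type*} [Fintype α] [DecidableEq α]

theorem IsCycle.mem_zpowers_of_commute {g c : Perm α} (hc : c.IsCycle) (hcomm : Commute g c)
    (hsupp : g.support ⊆ c.support) : g ∈ Subgroup.zpowers c := by
  obtain ⟨hc', hmem⟩ := hc.commute_iff.mp hcomm
  rwa [ofSubtype_subtypePerm hc' fun x hx => hsupp (mem_support.mpr hx)] at hmem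

theorem IsCycle.even_of_sign_mul_zpow {c s : Perm α} (hc : c.IsCycle) (hcard : Even #c.support)
    {k : ℤ} (hsign : Perm.sign (s * c ^ k) = Perm.sign s) : Even k := by
  rw [map_mul, map_zpow, hc.sign, hcard.neg_one_pow, mul_eq_left] at hsign
  by_contra hodd
  rw [Int.not_even_iff_odd.mp hodd |>.neg_one_zpow] at hsign
  exact absurd hsign (by decide)

end Equiv.Perm

theorem conj_by_power_of_cycle_one_cycle_general
    {n : ℕ} (τ₁ : Equiv.Perm (Fin n))
    (hτ₁ : τ₁.IsCycle)
    (s₁ s₂ : Equiv.Perm (Fin n))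
    (hs₁supp : s₁.support ⊆ τ₁.support)
    (hs₂supp : s₂.support ⊆ τ₁.support)
    (hc₁ : s₁ * τ₁ * s₁⁻¹ = τ₁⁻¹) (hc₂ : s₂ * τ₁ * s₂⁻¹ = τ₁⁻¹)
    (hconj : IsConj s₁ s₂) :
    ∃ z : ℤ, τ₁ ^ z * s₁ * (τ₁ ^ z)⁻¹ = s₂ := by
  have hsupp : (s₂⁻¹ * s₁).support ⊆ τ₁.support :=
    (support_mul_le _ _).trans (sup_le (support_inv s₂ ▸ hs₂supp) hs₁supp)
  obtain ⟨k, hk⟩ := Subgroup.mem_zpowers_iff.mp <|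
    hτ₁.mem_zpowers_of_commute (commute_inv_mul_of_conj_eq_s9 (hc₁.trans hc₂.symm)) hsupp
  have hs₁ : s₁ = s₂ * τ₁ ^ k := by rw [hk, mul_inv_cancel_left]
  have hsign : sign (s₂ * τ₁ ^ k) = sign s₂ := hs₁ ▸ isConj_iff_eq.mp (sign.map_isConj hconj)
  obtain ⟨z, hz⟩ : ∃ z : ℤ, (orderOf τ₁ : ℤ) ∣ k - 2 * z := by
    refine exists_dvd_sub_two_mul ((Nat.even_or_odd _).symm.imp_right fun heven => ?_)
    exact hτ₁.even_of_sign_mul_zpow (hτ₁.orderOf ▸ heven) hsign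
  refine ⟨z, ?_⟩
  rw [hs₁, zpow_mul_mul_zpow_inv_of_conj_eq_inv hc₂, orderOf_dvd_iff_zpow_eq_one.mp hz, mul_one]

/-- Let `τ₁` be a `d`-cycle in `S_n` and let `s₁, s₂` be products of
pairwise disjoint transpositions (i.e. involutions, possibly trivial) supported on the
support of `τ₁`, with `s₁τ₁s₁⁻¹ = s₂τ₁s₂⁻¹ = τ₁⁻¹`.  If `s₁` and `s₂` are conjugate
in `S_n`, then `τ₁^z s₁ τ₁^{-z} = s₂` for some integer `z`. -/
theorem conj_by_power_of_cycle_one_cycle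
    {n d : ℕ} (τ₁ : Equiv.Perm (Fin n))
    (hτ₁ : τ₁.IsCycle) (hl₁ : τ₁.support.card = d)
    (s₁ s₂ : Equiv.Perm (Fin n))
    (hs₁supp : s₁.support ⊆ τ₁.support)
    (hs₂supp : s₂.support ⊆ τ₁.support)
    (hs₁inv : s₁ ^ 2 = 1) (hs₂inv : s₂ ^ 2 = 1)
    (hc₁ : s₁ * τ₁ * s₁⁻¹ = τ₁⁻¹) (hc₂ : s₂ * τ₁ * s₂⁻¹ = τ₁⁻¹)
    (hconj : IsConj s₁ s₂) :
    ∃ z : ℤ, τ₁ ^ z * s₁ * (τ₁ ^ z)⁻¹ = s₂ :=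
  conj_by_power_of_cycle_one_cycle_general τ₁ hτ₁ s₁ s₂ hs₁supp hs₂supp hc₁ hc₂ hconj
end

section
/- Let σ = τ₁τ₂⋯τ_k ∈ S_n be a product of k pairwise disjoint cycles of length d with Fix(σ) = ∅, and let π, π' ∈ S_n satisfy π² = (π')² = 1, πσπ⁻¹ = σ⁻¹ and π'σ(π')⁻¹ = σ⁻¹. If π and π' are conjugate in S_n and their images under the induced homomorphism H_σ → H_σ/K_{H_σ} ≅ S_k have the same cycle type in S_k, then there exists ρ ∈ Cent₀(σ) such that ρπρ⁻¹ = π'. -/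
/-!
Label the points of the `k` cycles of `σ` by `Fin k × ZMod d`, so that `σ` becomes the shift
`(i, j) ↦ (i, j + 1)`. An involution that inverts `σ` and moves the cycles by `g` is then a
reflection `(i, j) ↦ (g i, c i - j)` with `g² = 1` and `c ∘ g = c`, and every map
`(i, j) ↦ (s i, j + b i)` commutes with the shift. Such a map conjugates the reflection of `(g, c)`
into that of `(g', c')` as soon as `s g = g' s` and `b i + b (g i) = c' (s i) - c i`: on a
2-cycle `{i, g i}` of `g` this can always be solved, at a fixed point `i` it needs `c' (s i) - c i`
to be even in `ZMod d`. A reflection fixes `#{j | 2 j = 0}` points in each block with `g i = i`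
and `c i` even and no other point, so conjugacy of `π` and `π'` in `S_n` says that `g` and `g'`
have equally many such blocks. Together with equal cycle types this gives an `s` conjugating `g`
to `g'` that matches these blocks, and then `c' (s i) - c i` is even, since a difference of two
non-even elements of `ZMod d` is even.
-/

open Equiv Equiv.Perm Finset

open scoped Pointwise

instance {d : ℕ} [NeZero d] : DecidablePred (Even : ZMod d → Prop) :=
  fun _ => inferInstanceAs (Decidable (∃ _, _))

theorem ZMod.even_sub_of_even_iff {d : ℕ} {a b : ZMod d} (h : Even a ↔ Even b) :
    Even (a - b) := by
  obtain ⟨x, rfl⟩ := ZMod.intCast_surjective a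
  obtain ⟨y, rfl⟩ := ZMod.intCast_surjective b
  have hcast {z : ℤ} (hz : Even z) : Even (z : ZMod d) := hz.map (Int.castRingHom (ZMod d))
  by_cases hx : Even (x : ZMod d)
  · exact hx.sub (h.mp hx)
  · have hxy : Even (x - y) :=
      Int.even_sub.mpr (iff_of_false (mt hcast hx) (mt hcast (mt h.mpr hx)))
    exact_mod_cast hcast hxy

theorem ZMod.card_two_mul_eq {d : ℕ} [NeZero d] (a : ZMod d) :
    #{j : ZMod d | 2 * j = a} = if Even a then #{j : ZMod d | 2 * j = 0} else 0 := by
  split_ifs with ha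
  · obtain ⟨r, rfl⟩ := ha
    exact AddMonoidHom.card_fiber_eq_of_mem_range (AddMonoidHom.mulLeft (2 : ZMod d))
      ⟨r, two_mul r⟩ ⟨0, mul_zero 2⟩
  · rw [card_eq_zero, filter_eq_empty_iff]
    rintro j - rfl
    exact ha (even_two_mul j)

theorem Finset.exists_perm_smul_eq_of_card_eq {α : Type*} [DecidableEq α] {s t : Finset α}
    (h : #s = #t) :
    ∃ u : Perm α, u • s = t := by
  obtain ⟨u, hu⟩ := (Set.powersetCard.isPretransitive (α := α) (n := #t)).exists_smul_eq
    ⟨s, h⟩ ⟨t, rfl⟩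
  exact ⟨u, congrArg Subtype.val hu⟩

section Perm

variable {α : Type*} [Fintype α] [DecidableEq α]

theorem Equiv.Perm.card_fixed_eq_of_isConj {p q : Perm α} (h : IsConj p q) :
    #{x | p x = x} = #{x | q x = x} := by
  obtain ⟨c, rfl⟩ := isConj_iff.mp h
  exact card_equiv c fun x => by simp only [mem_filter, mem_univ, true_and]; simp [Perm.mul_apply]

theorem Equiv.Perm.exists_commute_forall_fixed_iff {g : Perm α} {p q : α → Prop}
    [DecidablePred p] [DecidablePred q]
    (h : #{x | g x = x ∧ p x} = #{x | g x = x ∧ q x}) :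
    ∃ u : Perm α, Commute u g ∧ ∀ x, g x = x → (p x ↔ q (u x)) := by
  let S : Finset (Function.fixedPoints g) := ({x | p x} : Finset α).subtype _
  let T : Finset (Function.fixedPoints g) := ({x | q x} : Finset α).subtype _
  obtain ⟨u, hu⟩ : ∃ u : Perm (Function.fixedPoints g), u • S = T := by
    refine exists_perm_smul_eq_of_card_eq ?_
    simpa [S, T, card_subtype, filter_filter, Function.IsFixedPt, and_comm] using h
  refine ⟨ofSubtype u, (disjoint_ofSubtype_of_memFixedPoints_self u).commute, fun x hx => ?_⟩
  have hmem := smul_mem_smul_finset_iff (s := S) u (b := ⟨x, hx⟩)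
  rw [hu] at hmem
  simpa [S, T, ofSubtype_apply_of_mem u hx] using hmem.symm

theorem Equiv.Perm.exists_conj_forall_fixed_iff {g g' : Perm α}
    (hct : g.cycleType = g'.cycleType) {p q : α → Prop} [DecidablePred p] [DecidablePred q]
    (h : #{x | g x = x ∧ p x} = #{x | g' x = x ∧ q x}) :
    ∃ s : Perm α, s * g = g' * s ∧ ∀ x, g x = x → (p x ↔ q (s x)) := by
  obtain ⟨s₀, rfl⟩ := isConj_iff.mp (isConj_iff_cycleType_eq.mpr hct)
  obtain ⟨u, hu, hpq⟩ := exists_commute_forall_fixed_iff (g := s₀ * g * s₀⁻¹)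
    (p := fun x => p (s₀⁻¹ x)) (q := q) <| by
      rw [← h]
      refine (card_equiv s₀ fun x => ?_).symm
      simp only [mem_filter, mem_univ, true_and]
      simp [Perm.mul_apply]
  refine ⟨u * s₀, ?_, fun x hx => by simpa [Perm.mul_apply, hx] using hpq (s₀ x)⟩
  rw [← mul_assoc (s₀ * g * s₀⁻¹), ← hu.eq]
  group

end Perm

theorem Function.Involutive.exists_add_apply_eq {ι M : Type*} [LinearOrder ι] [AddMonoid M]
    {g : ι → ι} (hg : Function.Involutive g) {h : ι → M} (hhg : ∀ i, h (g i) = h i)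
    (heven : ∀ i, g i = i → Even (h i)) : ∃ b : ι → M, ∀ i, b i + b (g i) = h i := by
  choose! r hr using heven
  refine ⟨fun i => if i < g i then 0 else if g i < i then h i else r i, fun i => ?_⟩
  rcases lt_trichotomy i (g i) with hlt | heq | hgt
  · simp [hlt, hlt.not_gt, hg i, hhg]
  · simp [← heq, hr i heq.symm]
  · simp [hgt, hgt.not_gt, hg i]

theorem pow_zmod_val_natCast {G : Type*} [Monoid G] {x : G} {d : ℕ} (h : orderOf x = d)
    (m : ℕ) : x ^ (m : ZMod d).val = x ^ m := by
  rw [ZMod.val_natCast, ← h, pow_mod_orderOf]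

theorem pow_zmod_val_add_one {G : Type*} [Monoid G] {x : G} {d : ℕ} [NeZero d]
    (h : orderOf x = d) (j : ZMod d) : x ^ (j + 1).val = x * x ^ j.val := by
  rw [show j + 1 = ((j.val + 1 : ℕ) : ZMod d) by simp, pow_zmod_val_natCast h, pow_succ']

namespace Equiv.Perm.IsCycle

variable {α : Type*} [Fintype α] [DecidableEq α] {c : Perm α} {a : α} {d : ℕ}

theorem pow_zmod_val_apply_injective [NeZero d] (hc : c.IsCycle) (hd : #c.support = d)
    (ha : a ∈ c.support) : Function.Injective fun j : ZMod d => (c ^ j.val) a := by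
  intro j j' h
  have := hc.pow_eq_pow_iff.mpr ⟨a, mem_support.mp ha, h⟩
  rw [pow_eq_pow_iff_modEq, hc.orderOf, hd] at this
  simpa using (ZMod.natCast_eq_natCast_iff _ _ _).mpr this

theorem exists_pow_zmod_val_apply_eq (hc : c.IsCycle) (hd : #c.support = d)
    (ha : a ∈ c.support) {x : α} (hx : x ∈ c.support) : ∃ j : ZMod d, (c ^ j.val) a = x := by
  obtain ⟨m, rfl⟩ := hc.exists_pow_eq (mem_support.mp ha) (mem_support.mp hx)
  exact ⟨m, by rw [pow_zmod_val_natCast (hc.orderOf.trans hd)]⟩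

end Equiv.Perm.IsCycle

theorem Equiv.Perm.ofFn_prod_apply_of_mem_support {α : Type*} [Fintype α] [DecidableEq α]
    {k : ℕ} {τ : Fin k → Perm α} (hdisj : Pairwise fun i j => (τ i).Disjoint (τ j))
    {i : Fin k} {x : α} (hx : x ∈ (τ i).support) : (List.ofFn τ).prod x = τ i x :=
  (eq_on_support_mem_disjoint (List.mem_ofFn.mpr ⟨i, rfl⟩)
    (List.pairwise_ofFn.mpr fun _ _ hij => hdisj hij.ne) x hx).symm

theorem Equiv.Perm.exists_mem_support_of_ofFn_prod_apply_ne {α : Type*} [Fintype α]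
    [DecidableEq α] {k : ℕ} {τ : Fin k → Perm α} {x : α} (hx : (List.ofFn τ).prod x ≠ x) :
    ∃ i, x ∈ (τ i).support := by
  obtain ⟨f, hf, hxf⟩ := exists_mem_support_of_mem_support_prod (mem_support.mpr hx)
  obtain ⟨i, rfl⟩ := List.mem_ofFn.mp hf
  exact ⟨i, hxf⟩

namespace CycleBlocks

variable {ι : Type*} {d : ℕ}

def translate (s : Perm ι) (b : ι → ZMod d) : Perm (ι × ZMod d) :=
  prodShear s fun i => Equiv.addRight (b i)

def reflect (g : Perm ι) (c : ι → ZMod d) : Perm (ι × ZMod d) :=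
  prodShear g fun i => Equiv.subLeft (c i)

def shift : Perm (ι × ZMod d) := translate 1 1

@[simp] theorem translate_apply (s : Perm ι) (b : ι → ZMod d) (p : ι × ZMod d) :
    translate s b p = (s p.1, p.2 + b p.1) := rfl

@[simp] theorem reflect_apply (g : Perm ι) (c : ι → ZMod d) (p : ι × ZMod d) :
    reflect g c p = (g p.1, c p.1 - p.2) := rfl

@[simp] theorem shift_pow_apply (m : ℕ) (p : ι × ZMod d) :
    (shift ^ m) p = (p.1, p.2 + m) := by
  induction m with
  | zero => simp
  | succ m ih =>
    rw [pow_succ', Perm.mul_apply, ih]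
    simp [shift, add_assoc]

theorem commute_translate_shift (s : Perm ι) (b : ι → ZMod d) :
    Commute (translate s b) shift := by
  ext p <;> simp [shift, Perm.mul_apply, add_right_comm]

theorem translate_conj_reflect {s g g' : Perm ι} {b c c' : ι → ZMod d}
    (hs : s * g = g' * s) (hb : ∀ i, b i + b (g i) = c' (s i) - c i) :
    translate s b * reflect g c * (translate s b)⁻¹ = reflect g' c' := by
  rw [mul_inv_eq_iff_eq_mul]
  ext ⟨i, j⟩
  · simpa [Perm.mul_apply] using congr($hs i)
  · simp only [Perm.mul_apply, translate_apply, reflect_apply]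
    linear_combination hb i

theorem reflect_sq_eq_one_iff {g : Perm ι} {c : ι → ZMod d} :
    reflect g c ^ 2 = 1 ↔ Function.Involutive g ∧ ∀ i, c (g i) = c i := by
  simp only [sq, Perm.ext_iff, Perm.mul_apply, reflect_apply, Perm.one_apply, Prod.ext_iff,
    Prod.forall, Function.Involutive]
  constructor
  · intro h
    exact ⟨fun i => (h i 0).1, fun i => sub_eq_zero.mp (by simpa using (h i 0).2)⟩
  · rintro ⟨hg, hc⟩ i j
    exact ⟨hg i, by rw [hc]; ring⟩

theorem eq_reflect_of_mul_shift [NeZero d] {P : Perm (ι × ZMod d)} {g : Perm ι}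
    (hP : P * shift = shift⁻¹ * P) (hg : ∀ p, (P p).1 = g p.1) :
    P = reflect g fun i => (P (i, 0)).2 := by
  have hpow (m : ℕ) : P * shift ^ m = (shift ^ m)⁻¹ * P := by
    rw [← inv_pow]; exact (SemiconjBy.pow_right hP m).eq
  ext ⟨i, j⟩
  · exact hg _
  · obtain ⟨m, rfl⟩ : ∃ m : ℕ, (m : ZMod d) = j := ⟨j.val, ZMod.natCast_zmod_val j⟩
    have hPm := congr($(hpow m) (i, 0))
    simp only [Perm.mul_apply, shift_pow_apply, zero_add] at hPm
    have hinv : (shift ^ m)⁻¹ (P (i, 0)) = ((P (i, 0)).1, (P (i, 0)).2 - m) := by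
      rw [Perm.inv_eq_iff_eq]; simp
    simp [hPm, hinv]

theorem card_fixed_reflect [NeZero d] [Fintype ι] [DecidableEq ι] (g : Perm ι)
    (c : ι → ZMod d) :
    #{p | reflect g c p = p} = #{j : ZMod d | 2 * j = 0} * #{i | g i = i ∧ Even (c i)} := by
  have hfib (i : ι) : #{j | reflect g c (i, j) = (i, j)} =
      if g i = i ∧ Even (c i) then #{j : ZMod d | 2 * j = 0} else 0 := by
    have hiff (j : ZMod d) : reflect g c (i, j) = (i, j) ↔ g i = i ∧ 2 * j = c i := by
      simp only [reflect_apply, Prod.mk.injEq]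
      rw [sub_eq_iff_eq_add, two_mul, eq_comm (a := c i)]
    by_cases hgi : g i = i
    · simp only [hiff, hgi, true_and]
      exact ZMod.card_two_mul_eq (c i)
    · simp [hgi]
  rw [card_filter, Fintype.sum_prod_type]
  simp_rw [← card_filter, hfib]
  rw [← sum_filter, sum_const, smul_eq_mul, mul_comm]

theorem exists_translate_conj_reflect [NeZero d] [Fintype ι] [LinearOrder ι]
    {g g' : Perm ι} {c c' : ι → ZMod d} (hg : Function.Involutive g)
    (hc : ∀ i, c (g i) = c i) (hc' : ∀ i, c' (g' i) = c' i) (hct : g.cycleType = g'.cycleType)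
    (hfix : #{i | g i = i ∧ Even (c i)} = #{i | g' i = i ∧ Even (c' i)}) :
    ∃ s b, translate s b * reflect g c * (translate s b)⁻¹ = reflect g' c' := by
  obtain ⟨s, hs, hpar⟩ := exists_conj_forall_fixed_iff hct hfix
  have hsg (i : ι) : s (g i) = g' (s i) := congr($hs i)
  obtain ⟨b, hb⟩ := hg.exists_add_apply_eq (h := fun i => c' (s i) - c i)
    (fun i => by simp only [hsg, hc, hc'])
    (fun i hi => ZMod.even_sub_of_even_iff (hpar i hi).symm)
  exact ⟨s, b, translate_conj_reflect hs hb⟩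

theorem exists_equiv_shift {α : Type*} [Fintype α] [DecidableEq α] [NeZero d] {σ : Perm α}
    {τ : ι → Perm α} (hcyc : ∀ i, (τ i).IsCycle) (hlen : ∀ i, #(τ i).support = d)
    (hdisj : Pairwise fun i j => (τ i).Disjoint (τ j))
    (hcover : ∀ x, ∃ i, x ∈ (τ i).support) (hστ : ∀ i, ∀ x ∈ (τ i).support, σ x = τ i x) :
    ∃ e : α ≃ ι × ZMod d,
      e.permCongrHom σ = shift ∧ ∀ x i, x ∈ (τ i).support ↔ (e x).1 = i := by
  choose a ha using fun i => (hcyc i).nonempty_support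
  let f (p : ι × ZMod d) : α := (τ p.1 ^ p.2.val) (a p.1)
  have hf (p : ι × ZMod d) : f p ∈ (τ p.1).support := pow_apply_mem_support.mpr (ha p.1)
  have huniq {x : α} {i j : ι} (hi : x ∈ (τ i).support) (hj : x ∈ (τ j).support) :
      i = j := by
    by_contra hij
    exact disjoint_left.mp ((hdisj hij).disjoint_support) hi hj
  have hbij : Function.Bijective f := by
    refine ⟨fun p q hpq => ?_, fun x => ?_⟩
    · obtain ⟨i, j⟩ := p
      obtain ⟨i', j'⟩ := q
      obtain rfl : i = i' := huniq (hf (i, j)) (by rw [hpq]; exact hf (i', j'))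
      exact Prod.ext rfl ((hcyc i).pow_zmod_val_apply_injective (hlen i) (ha i) hpq)
    · obtain ⟨i, hi⟩ := hcover x
      obtain ⟨j, hj⟩ := (hcyc i).exists_pow_zmod_val_apply_eq (hlen i) (ha i) hi
      exact ⟨(i, j), hj⟩
  let e := (Equiv.ofBijective f hbij).symm
  have he (p : ι × ZMod d) : e.symm p = f p := rfl
  have hfe (x : α) : f (e x) ∈ (τ (e x).1).support ↔ x ∈ (τ (e x).1).support := by
    rw [← he, e.symm_apply_apply]
  refine ⟨e, Equiv.ext fun p => ?_, fun x i => ⟨fun hx => ?_, ?_⟩⟩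
  · rw [permCongrHom_coe, permCongr_apply, he, hστ _ _ (hf p), ← e.eq_symm_apply, he]
    simp [f, shift, pow_zmod_val_add_one ((hcyc p.1).orderOf.trans (hlen p.1))]
  · exact huniq ((hfe x).mp (hf (e x))) hx
  · rintro rfl
    exact (hfe x).mp (hf (e x))

theorem exists_permCongrHom_eq_reflect [NeZero d] {α : Type*} [Fintype α] [DecidableEq α]
    {σ π : Perm α} {τ : ι → Perm α} {g : Perm ι} {e : α ≃ ι × ZMod d}
    (he : e.permCongrHom σ = shift) (hτ : ∀ x i, x ∈ (τ i).support ↔ (e x).1 = i)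
    (hπσ : π * σ * π⁻¹ = σ⁻¹) (hg : ∀ i, ∀ x ∈ (τ i).support, π x ∈ (τ (g i)).support) :
    ∃ c, e.permCongrHom π = reflect g c := by
  refine ⟨_, eq_reflect_of_mul_shift ?_ fun p => (hτ _ _).mp (hg p.1 _ ((hτ _ _).mpr ?_))⟩
  · rw [← he, ← map_inv, ← map_mul, ← map_mul, ← hπσ, inv_mul_cancel_right]
  · simp

end CycleBlocks

open CycleBlocks

/-- `σ = τ₁⋯τ_k` is a product of `k` pairwise disjoint `d`-cycles
without fixed points, and `π, π'` are involutions with `πσπ⁻¹ = π'σ(π')⁻¹ = σ⁻¹`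
(hence `π, π' ∈ H_σ`).  Their images under `H_σ → H_σ/K_{H_σ} ≅ S_k` are encoded by
permutations `g, g'` of the cycle indices describing how the supports of the cycles
are permuted.  If `π, π'` are conjugate in `S_n` and `g, g'` have the same cycle type,
then `ρπρ⁻¹ = π'` for some `ρ ∈ Cent₀(σ)`. -/
theorem dihedral_conjugate_in_cent0
    {n k d : ℕ} (σ : Equiv.Perm (Fin n)) (τ : Fin k → Equiv.Perm (Fin n))
    (hcyc : ∀ i, (τ i).IsCycle) (hlen : ∀ i, (τ i).support.card = d)
    (hdisj : ∀ i j, i ≠ j → Equiv.Perm.Disjoint (τ i) (τ j))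
    (hσ : σ = (List.ofFn τ).prod)
    (hfix : ∀ x : Fin n, σ x ≠ x)
    (π π' : Equiv.Perm (Fin n))
    (hπ2 : π ^ 2 = 1) (hπ'2 : π' ^ 2 = 1)
    (hπσ : π * σ * π⁻¹ = σ⁻¹) (hπ'σ : π' * σ * π'⁻¹ = σ⁻¹)
    -- the images of `π` and `π'` under the induced homomorphism `H_σ → S_k`
    (g g' : Equiv.Perm (Fin k))
    (hg : ∀ i : Fin k, ∀ p ∈ (τ i).support, π p ∈ (τ (g i)).support)
    (hg' : ∀ i : Fin k, ∀ p ∈ (τ i).support, π' p ∈ (τ (g' i)).support)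
    (hconj : IsConj π π')
    (hct : g.cycleType = g'.cycleType) :
    ∃ ρ ∈ Cent0 σ, ρ * π * ρ⁻¹ = π' := by
  obtain _ | ⟨⟨x⟩⟩ := isEmpty_or_nonempty (Fin n)
  · exact ⟨1, one_mem _, Subsingleton.elim _ _⟩
  have hcover (x : Fin n) : ∃ i, x ∈ (τ i).support :=
    exists_mem_support_of_ofFn_prod_apply_ne (hσ ▸ hfix x)
  obtain ⟨i, hi⟩ := hcover x
  have : NeZero d := ⟨hlen i ▸ card_ne_zero_of_mem hi⟩
  obtain ⟨e, he, hτe⟩ := exists_equiv_shift hcyc hlen (fun i j => hdisj i j) hcover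
    fun i x hx => hσ ▸ ofFn_prod_apply_of_mem_support (fun i j => hdisj i j) hx
  set E := e.permCongrHom
  obtain ⟨c, hc⟩ := exists_permCongrHom_eq_reflect he hτe hπσ hg
  obtain ⟨c', hc'⟩ := exists_permCongrHom_eq_reflect he hτe hπ'σ hg'
  obtain ⟨hgg, hcg⟩ := reflect_sq_eq_one_iff.mp (by rw [← hc, ← map_pow, hπ2, map_one])
  obtain ⟨-, hcg'⟩ := reflect_sq_eq_one_iff.mp (by rw [← hc', ← map_pow, hπ'2, map_one])
  have hfixed := card_fixed_eq_of_isConj (E.toMonoidHom.map_isConj hconj)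
  rw [MulEquiv.coe_toMonoidHom, hc, hc', card_fixed_reflect, card_fixed_reflect] at hfixed
  obtain ⟨s, b, hsb⟩ := exists_translate_conj_reflect hgg hcg hcg' hct
    (Nat.eq_of_mul_eq_mul_left (card_pos.mpr ⟨0, by simp⟩) hfixed)
  refine ⟨E.symm (translate s b), ⟨?_, fun x _ => mem_support.mpr (hfix x)⟩, E.injective ?_⟩
  · rw [← E.symm_apply_apply σ, he]
    exact (commute_translate_shift s b).map E.symm
  · rw [map_mul, map_mul, map_inv, E.apply_symm_apply, hc, hc', hsb]
end

section
/- Let σ = τ₁τ₂⋯τ_k ∈ S_n be a product of k pairwise disjoint cycles of odd length d with Fix(σ) = ∅, and let π, π' ∈ S_n satisfy π² = (π')² = 1, πσπ⁻¹ = σ⁻¹ and π'σ(π')⁻¹ = σ⁻¹. If π and π' are conjugate in S_n, then there exists ρ ∈ Cent₀(σ) such that ρπρ⁻¹ = π'. -/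
/-!
With `σ` and the involution `π`, the group `⟨σ, π⟩` is dihedral of order `2d`. Each of its orbits
is either a single `σ`-cycle mapped to itself by `π`, which for odd `d` contains exactly one fixed
point of `π`, or a pair of `σ`-cycles swapped by `π`, on which `⟨σ, π⟩` acts freely. Hence
`(σ, π)` is isomorphic to a standard model determined by the number of fixed points of `π` and the
number of free orbits. For conjugate `π` and `π'` the first numbers agree, hence so do the second
by counting points, and an isomorphism between the two models is a permutation commuting with `σ`
that conjugates `π` to `π'`.
-/

open Equiv Equiv.Perm Finset

open Function

variable {α : Type*}

theorem Equiv.Perm.sameCycle_of_zpow_apply_eq {σ : Perm α} {x y : α} {a b : ℤ}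
    (h : (σ ^ a) x = (σ ^ b) y) : σ.SameCycle x y :=
  sameCycle_zpow_left.1 (sameCycle_zpow_right.1 (by rw [h]))

theorem Equiv.Perm.zpow_apply_eq_zpow_apply_iff_of_cycleType [Fintype α] [DecidableEq α]
    {σ : Perm α} {d : ℕ} (hσ : ∀ c ∈ σ.cycleType, c = d) {x : α} (hx : σ x ≠ x) (a b : ℤ) :
    (σ ^ a) x = (σ ^ b) x ↔ (a : ZMod d) = b := by
  have hmem : x ∈ (σ.cycleOf x).support := mem_support_cycleOf_iff.2 ⟨.refl σ x, mem_support.2 hx⟩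
  have hcard : #(σ.cycleOf x).support = d :=
    hσ _ (Multiset.mem_map_of_mem _ (cycleOf_mem_cycleFactorsFinset_iff.2 (mem_support.2 hx)))
  rw [(isCycleOn_support_cycleOf σ x).zpow_apply_eq_zpow_apply hmem, hcard,
    ZMod.intCast_eq_intCast_iff]

theorem mul_mul_inv_eq_of_semiconj {M : Type*} (E E' : M ≃ α) {f : M → M} {σ σ' : Perm α}
    (hE : Semiconj E f σ) (hE' : Semiconj E' f σ') :
    E.symm.trans E' * σ * (E.symm.trans E')⁻¹ = σ' := by
  rw [mul_inv_eq_iff_eq_mul]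
  ext x
  obtain ⟨m, rfl⟩ := E.surjective x
  simp [← hE m, hE' m]

/-- `σ` and `π` define an action of the dihedral group of order `2d` in which every `σ`-cycle
has length exactly `d`. -/
structure IsDihedralPair (d : ℕ) (σ π : Perm α) : Prop where
  zpow_apply_eq_zpow_apply_iff : ∀ (x : α) (a b : ℤ), (σ ^ a) x = (σ ^ b) x ↔ (a : ZMod d) = b
  sq_eq_one : π ^ 2 = 1
  conj_eq_inv : π * σ * π⁻¹ = σ⁻¹

namespace IsDihedralPair

variable {d : ℕ} {σ π : Perm α}

theorem apply_apply (h : IsDihedralPair d σ π) (x : α) : π (π x) = x := by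
  rw [← Perm.mul_apply, ← sq, h.sq_eq_one, Perm.one_apply]

theorem apply_cond (h : IsDihedralPair d σ π) (b : Bool) (x : α) :
    π (cond b (π x) x) = cond (!b) (π x) x := by
  cases b
  · rfl
  · exact h.apply_apply x

theorem apply_zpow_apply (h : IsDihedralPair d σ π) (m : ℤ) (x : α) :
    π ((σ ^ m) x) = (σ ^ (-m)) (π x) := by
  have hconj : π * σ ^ m * π⁻¹ = σ ^ (-m) := by
    rw [← conj_zpow, h.conj_eq_inv, inv_zpow, zpow_neg]
  rw [← hconj]
  simp

theorem sameCycle_apply_iff (h : IsDihedralPair d σ π) {x y : α} :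
    σ.SameCycle (π x) (π y) ↔ σ.SameCycle x y := by
  refine ⟨fun hxy => ?_, fun ⟨m, hm⟩ => ⟨-m, by rw [← hm, h.apply_zpow_apply]⟩⟩
  obtain ⟨m, hm⟩ := hxy
  exact ⟨-m, by rw [← h.apply_apply x, ← h.apply_zpow_apply, hm, h.apply_apply]⟩

theorem eq_of_sameCycle_of_apply_eq (h : IsDihedralPair d σ π) (hd : Odd d) {x y : α}
    (hx : π x = x) (hy : π y = y) (hxy : σ.SameCycle x y) : x = y := by
  obtain ⟨m, rfl⟩ := hxy
  have hm : (m : ZMod d) = -m := by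
    rw [← Int.cast_neg, ← h.zpow_apply_eq_zpow_apply_iff x, ← hy, h.apply_zpow_apply, hx]
  have hunit : IsUnit (2 : ZMod d) := by
    exact_mod_cast (ZMod.isUnit_iff_coprime 2 d).2 (Nat.coprime_two_left.2 hd)
  have hm0 : (m : ZMod d) = (0 : ℤ) := by
    rw [Int.cast_zero, ← hunit.mul_right_eq_zero]
    linear_combination hm
  rw [(h.zpow_apply_eq_zpow_apply_iff x m 0).2 hm0, zpow_zero, Perm.one_apply]

theorem exists_apply_eq_sameCycle (h : IsDihedralPair d σ π) (hd : Odd d) {z : α}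
    (hz : σ.SameCycle z (π z)) : ∃ x, π x = x ∧ σ.SameCycle x z := by
  obtain ⟨m, hm⟩ := hz
  obtain ⟨e, rfl⟩ := hd
  -- `(e + 1) * m` halves `m` modulo `2 * e + 1`: this is the midpoint between `z` and `π z`
  refine ⟨(σ ^ ((e + 1) * m)) z, ?_, sameCycle_zpow_left.2 (.refl σ z)⟩
  rw [h.apply_zpow_apply, ← hm, ← Perm.mul_apply, ← zpow_add,
    h.zpow_apply_eq_zpow_apply_iff]
  have hd0 : ((2 * e + 1 : ℕ) : ZMod (2 * e + 1)) = 0 := ZMod.natCast_self _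
  push_cast at hd0 ⊢
  linear_combination (-(m : ZMod (2 * e + 1))) * hd0

def orbitSetoid (h : IsDihedralPair d σ π) : Setoid α where
  r x y := σ.SameCycle x y ∨ σ.SameCycle (π x) y
  iseqv := by
    refine ⟨fun x => .inl (.refl σ x), ?_, ?_⟩
    · rintro x y (hxy | hxy)
      · exact .inl hxy.symm
      · rw [← h.sameCycle_apply_iff, h.apply_apply] at hxy
        exact .inr hxy.symm
    · rintro x y z (hxy | hxy) (hyz | hyz)
      · exact .inl (hxy.trans hyz)
      · exact .inr ((h.sameCycle_apply_iff.2 hxy).trans hyz)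
      · exact .inr (hxy.trans hyz)
      · rw [← h.sameCycle_apply_iff, h.apply_apply] at hxy
        exact .inl (hxy.trans hyz)

theorem orbitSetoid_iff (h : IsDihedralPair d σ π) {x y : α} :
    h.orbitSetoid x y ↔ ∃ (a : ℤ) (b : Bool), (σ ^ a) (cond b (π x) x) = y := by
  simp only [Bool.exists_bool, cond_false, cond_true, exists_or]
  exact Iff.rfl

theorem orbitSetoid_of_zpow_apply_eq (h : IsDihedralPair d σ π) {w y : α} {a a' : ℤ} {b : Bool}
    (he : (σ ^ a) (cond b (π w) w) = (σ ^ a') y) : h.orbitSetoid w y :=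
  h.orbitSetoid_iff.2 ⟨-a' + a, b, by
    rw [zpow_add, Perm.mul_apply, he, ← Perm.mul_apply, ← zpow_add, neg_add_cancel, zpow_zero,
      Perm.one_apply]⟩

theorem sameCycle_apply_iff_of_orbitSetoid (h : IsDihedralPair d σ π) {x y : α}
    (hxy : h.orbitSetoid x y) : σ.SameCycle x (π x) ↔ σ.SameCycle y (π y) := by
  have key : ∀ {x y : α}, σ.SameCycle x y → (σ.SameCycle x (π x) ↔ σ.SameCycle y (π y)) :=
    fun hxy => ⟨fun hx => hxy.symm.trans (hx.trans (h.sameCycle_apply_iff.2 hxy)),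
      fun hy => hxy.trans (hy.trans (h.sameCycle_apply_iff.2 hxy).symm)⟩
  rcases hxy with hxy | hxy
  · exact key hxy
  · rw [← key hxy, h.apply_apply, sameCycle_comm]

/-- The orbits on which `π` swaps two `σ`-cycles; the group acts freely on them. -/
abbrev RegularOrbits (h : IsDihedralPair d σ π) : Type _ :=
  Quotient (h.orbitSetoid.comap (Subtype.val : {z : α // ¬σ.SameCycle z (π z)} → α))

theorem eq_of_zpow_cond_eq (h : IsDihedralPair d σ π) {w : α} (hw : ¬σ.SameCycle w (π w))
    {a a' : ℤ} {b b' : Bool} (he : (σ ^ a) (cond b (π w) w) = (σ ^ a') (cond b' (π w) w)) :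
    b = b' ∧ (a : ZMod d) = a' := by
  have hsame := sameCycle_of_zpow_apply_eq he
  cases b <;> cases b' <;> simp only [cond_false, cond_true] at he hsame
  · exact ⟨rfl, (h.zpow_apply_eq_zpow_apply_iff _ a a').1 he⟩
  · exact (hw hsame).elim
  · exact (hw hsame.symm).elim
  · exact ⟨rfl, (h.zpow_apply_eq_zpow_apply_iff _ a a').1 he⟩

end IsDihedralPair

/-- `F` copies of `ℤ/d` with the reflection `m ↦ -m`, and `Q` copies of the dihedral group
`ℤ/d × Bool` acting on itself. -/
abbrev DihedralModel (d : ℕ) (F Q : Type*) := F × ZMod d ⊕ Q × ZMod d × Bool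

namespace DihedralModel

variable {d : ℕ} {F Q F' Q' : Type*}

def rotate : DihedralModel d F Q → DihedralModel d F Q
  | .inl (i, m) => .inl (i, m + 1)
  | .inr (j, m, b) => .inr (j, m + 1, b)

def reflect : DihedralModel d F Q → DihedralModel d F Q
  | .inl (i, m) => .inl (i, -m)
  | .inr (j, m, b) => .inr (j, -m, !b)

def congr (eF : F ≃ F') (eQ : Q ≃ Q') : DihedralModel d F Q ≃ DihedralModel d F' Q' :=
  Equiv.sumCongr (eF.prodCongr (.refl _)) (eQ.prodCongr (.refl _))

theorem semiconj_congr_rotate (eF : F ≃ F') (eQ : Q ≃ Q') :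
    Semiconj (congr (d := d) eF eQ) rotate rotate := by
  rintro (⟨i, m⟩ | ⟨j, m, b⟩) <;> rfl

theorem semiconj_congr_reflect (eF : F ≃ F') (eQ : Q ≃ Q') :
    Semiconj (congr (d := d) eF eQ) reflect reflect := by
  rintro (⟨i, m⟩ | ⟨j, m, b⟩) <;> rfl

theorem card [NeZero d] [Finite F] [Finite Q] :
    Nat.card (DihedralModel d F Q) = Nat.card F * d + Nat.card Q * (d * 2) := by
  simp [Nat.card_sum, Nat.card_prod]

def realize (σ π : Perm α) (x : F → α) (w : Q → α) : DihedralModel d F Q → α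
  | .inl (i, m) => (σ ^ (m.cast : ℤ)) (x i)
  | .inr (j, m, b) => (σ ^ (m.cast : ℤ)) (cond b (π (w j)) (w j))

variable {σ π : Perm α} {x : F → α} {w : Q → α}

theorem semiconj_realize_rotate
    (hσ : ∀ (y : α) (a b : ℤ), (σ ^ a) y = (σ ^ b) y ↔ (a : ZMod d) = b) :
    Semiconj (realize (d := d) σ π x w) rotate σ := by
  have key : ∀ (m : ZMod d) (y : α), (σ ^ ((m + 1).cast : ℤ)) y = σ ((σ ^ (m.cast : ℤ)) y) := by
    intro m y
    rw [← Perm.mul_apply, ← zpow_one_add, hσ]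
    push_cast [ZMod.intCast_zmod_cast]
    ring
  rintro (⟨i, m⟩ | ⟨j, m, b⟩)
  · exact key m (x i)
  · exact key m _

theorem semiconj_realize_reflect (h : IsDihedralPair d σ π) (hx : ∀ i, π (x i) = x i) :
    Semiconj (realize (d := d) σ π x w) reflect π := by
  have key : ∀ (m : ZMod d) (y : α), (σ ^ ((-m).cast : ℤ)) y = (σ ^ (-(m.cast : ℤ))) y := by
    intro m y
    rw [h.zpow_apply_eq_zpow_apply_iff]
    push_cast [ZMod.intCast_zmod_cast]
    rfl
  rintro (⟨i, m⟩ | ⟨j, m, b⟩)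
  · change (σ ^ ((-m).cast : ℤ)) (x i) = π ((σ ^ (m.cast : ℤ)) (x i))
    rw [key, h.apply_zpow_apply, hx]
  · change (σ ^ ((-m).cast : ℤ)) (cond (!b) (π (w j)) (w j)) =
      π ((σ ^ (m.cast : ℤ)) (cond b (π (w j)) (w j)))
    rw [key, h.apply_zpow_apply, h.apply_cond]

end DihedralModel

namespace IsDihedralPair

variable {d : ℕ} {σ π : Perm α}

noncomputable def realizeModel (h : IsDihedralPair d σ π) :
    DihedralModel d {x // π x = x} h.RegularOrbits → α :=
  DihedralModel.realize σ π Subtype.val fun q => q.out.1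

theorem injective_realizeModel (h : IsDihedralPair d σ π) (hd : Odd d) :
    Injective h.realizeModel := by
  have hcast : ∀ {m m' : ZMod d}, ((m.cast : ℤ) : ZMod d) = (m'.cast : ℤ) → m = m' := by
    simp
  rintro (⟨⟨x, hx⟩, m⟩ | ⟨q, m, b⟩) (⟨⟨x', hx'⟩, m'⟩ | ⟨q', m', b'⟩) he <;>
    change (σ ^ _) _ = (σ ^ _) _ at he
  · obtain rfl := h.eq_of_sameCycle_of_apply_eq hd hx hx' (sameCycle_of_zpow_apply_eq he)
    rw [hcast ((h.zpow_apply_eq_zpow_apply_iff _ _ _).1 he)]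
  · have hrel := h.orbitSetoid_of_zpow_apply_eq he.symm
    exact absurd ((h.sameCycle_apply_iff_of_orbitSetoid hrel).2 (by simp only [hx]; rfl)) q'.out.2
  · have hrel := h.orbitSetoid_of_zpow_apply_eq he
    exact absurd ((h.sameCycle_apply_iff_of_orbitSetoid hrel).2 (by simp only [hx']; rfl)) q.out.2
  · have hqq : q = q' := by
      rw [← Quotient.out_eq q, ← Quotient.out_eq q']
      refine Quotient.sound ((Setoid.comap_rel _ _ _ _).2 ?_)
      exact h.orbitSetoid.trans' (h.orbitSetoid_of_zpow_apply_eq he)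
        (h.orbitSetoid.symm' (h.orbitSetoid_of_zpow_apply_eq (a := m'.cast) rfl))
    subst hqq
    obtain ⟨rfl, hm⟩ := h.eq_of_zpow_cond_eq q.out.2 he
    rw [hcast hm]

theorem surjective_realizeModel (h : IsDihedralPair d σ π) (hd : Odd d) :
    Surjective h.realizeModel := by
  have hcast : ∀ (a : ℤ) (y : α), (σ ^ (((a : ZMod d).cast : ℤ))) y = (σ ^ a) y := fun a y =>
    (h.zpow_apply_eq_zpow_apply_iff _ _ _).2 (by simp)
  intro z
  by_cases hz : σ.SameCycle z (π z)
  · obtain ⟨x, hx, a, rfl⟩ := h.exists_apply_eq_sameCycle hd hz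
    exact ⟨.inl (⟨x, hx⟩, a), hcast a x⟩
  · let q : h.RegularOrbits := ⟦⟨z, hz⟩⟧
    have hq : h.orbitSetoid q.out.1 z := Quotient.mk_out (s := h.orbitSetoid.comap _) _
    obtain ⟨a, b, hab⟩ := h.orbitSetoid_iff.1 hq
    exact ⟨.inr (q, a, b), (hcast a _).trans hab⟩

theorem exists_commute_conj_eq [Finite α] {π' : Perm α}
    (h : IsDihedralPair d σ π) (h' : IsDihedralPair d σ π') (hd : Odd d) (hconj : IsConj π π') :
    ∃ ρ : Perm α, Commute ρ σ ∧ ρ * π * ρ⁻¹ = π' := by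
  have : NeZero d := ⟨hd.pos.ne'⟩
  obtain ⟨g, rfl⟩ := isConj_iff.1 hconj
  let eF : {x // π x = x} ≃ {x // (g * π * g⁻¹) x = x} := g.subtypeEquiv fun x => by simp
  let E := Equiv.ofBijective _ ⟨h.injective_realizeModel hd, h.surjective_realizeModel hd⟩
  let E' := Equiv.ofBijective _ ⟨h'.injective_realizeModel hd, h'.surjective_realizeModel hd⟩
  have hcard : Nat.card h.RegularOrbits = Nat.card h'.RegularOrbits := by
    have hE := Nat.card_congr E
    have hE' := Nat.card_congr E'
    rw [DihedralModel.card, Nat.card_congr eF] at hE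
    rw [DihedralModel.card] at hE'
    exact Nat.eq_of_mul_eq_mul_right (m := d * 2) (by have := hd.pos; omega) (by omega)
  obtain ⟨eQ⟩ := Finite.card_eq.1 hcard
  let E'' := (DihedralModel.congr eF eQ).trans E'
  refine ⟨E.symm.trans E'', mul_inv_eq_iff_eq_mul.1 ?_, ?_⟩
  · exact mul_mul_inv_eq_of_semiconj E E''
      (DihedralModel.semiconj_realize_rotate h.zpow_apply_eq_zpow_apply_iff)
      ((DihedralModel.semiconj_realize_rotate h'.zpow_apply_eq_zpow_apply_iff).comp_left
        (DihedralModel.semiconj_congr_rotate eF eQ))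
  · exact mul_mul_inv_eq_of_semiconj E E''
      (DihedralModel.semiconj_realize_reflect h fun x => x.2)
      ((DihedralModel.semiconj_realize_reflect h' fun x => x.2).comp_left
        (DihedralModel.semiconj_congr_reflect eF eQ))

end IsDihedralPair

/-- `σ = τ₁⋯τ_k` is a product of `k` pairwise disjoint cycles of
odd length `d` without fixed points, and `π, π'` are involutions with
`πσπ⁻¹ = π'σ(π')⁻¹ = σ⁻¹`.  If `π, π'` are conjugate in `S_n`, then `ρπρ⁻¹ = π'` for
some `ρ ∈ Cent₀(σ)`. -/
theorem dihedral_conjugate_in_cent0_of_odd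
    {n k d : ℕ} (σ : Equiv.Perm (Fin n)) (τ : Fin k → Equiv.Perm (Fin n))
    (hcyc : ∀ i, (τ i).IsCycle) (hlen : ∀ i, (τ i).support.card = d)
    (hdisj : ∀ i j, i ≠ j → Equiv.Perm.Disjoint (τ i) (τ j))
    (hσ : σ = (List.ofFn τ).prod)
    (hfix : ∀ x : Fin n, σ x ≠ x)
    (hodd : Odd d)
    (π π' : Equiv.Perm (Fin n))
    (hπ2 : π ^ 2 = 1) (hπ'2 : π' ^ 2 = 1)
    (hπσ : π * σ * π⁻¹ = σ⁻¹) (hπ'σ : π' * σ * π'⁻¹ = σ⁻¹)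
    (hconj : IsConj π π') :
    ∃ ρ ∈ Cent0 σ, ρ * π * ρ⁻¹ = π' := by
  have hcycleType : ∀ c ∈ σ.cycleType, c = d := by
    rw [cycleType_eq (List.ofFn τ) hσ.symm (by simpa [List.forall_mem_ofFn_iff] using hcyc)
      (List.pairwise_ofFn.2 fun i j hij => hdisj i j hij.ne)]
    simp [hlen]
  have hpair (p : Perm (Fin n)) (hp2 : p ^ 2 = 1) (hpσ : p * σ * p⁻¹ = σ⁻¹) :
      IsDihedralPair d σ p :=
    ⟨fun x => zpow_apply_eq_zpow_apply_iff_of_cycleType hcycleType (hfix x), hp2, hpσ⟩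
  obtain ⟨ρ, hρσ, hρπ⟩ :=
    (hpair π hπ2 hπσ).exists_commute_conj_eq (hpair π' hπ'2 hπ'σ) hodd hconj
  exact ⟨ρ, ⟨hρσ, fun x _ => mem_support.2 (hfix x)⟩, hρπ⟩
end

section
/- Let A be an abelian group generated by two elements a, b whose orders are relatively prime, and let φ, ψ : A → S_n be homomorphisms with φ(a) = ψ(a) = σ, where σ = σ₁⋯σ_l with each σᵢ a product of kᵢ pairwise disjoint cycles of length dᵢ and the dᵢ pairwise distinct. Write φ(b) = μ₀π₁⋯π_l and ψ(b) = μ₀'π₁'⋯π_l' with μ₀, μ₀' ∈ S_{Fix(σ)} and πᵢ, πᵢ' ∈ Cent₀(σᵢ). Then φ and ψ are conjugate if and only if μ₀ and μ₀' are conjugate in S_n and πᵢ and πᵢ' are conjugate in S_n for every 1 ≤ i ≤ l. -/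
/-
Since the orders of `a` and `b` are coprime, `A` is cyclic with generator `a * b`, so `φ` and `ψ`
are conjugate iff `σ * φ b` and `σ * ψ b` are, i.e. iff they have the same multiset of periods of
points. As `σ` and `φ b` commute and have coprime orders, the period of `x` under `σ * φ b` is the
product of its periods under `σ` and under `φ b`, and this product determines both factors: the
first is its gcd with the order of `σ`. So conjugacy amounts to `φ b` and `ψ b` having the same
periods on each level set of the `σ`-period. These level sets are `Fix(σ)`, on which `φ b` acts as
`μ₀`, and the supports of the `σᵢ`, told apart by the distinct `dᵢ`, on which `φ b` acts as `πᵢ`.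
-/

open Equiv Equiv.Perm Finset

theorem Finset.map_val_pair_eq_iff_fiberwise {α β γ : Type*} [DecidableEq β] [DecidableEq γ]
    (s : Finset α) (f : α → β) (g g' : α → γ) :
    s.val.map (fun x => (f x, g x)) = s.val.map (fun x => (f x, g' x)) ↔
      ∀ b, (s.filter (f · = b)).val.map g = (s.filter (f · = b)).val.map g' := by
  constructor
  · intro h b
    have hb := congrArg (fun m => (m.filter (·.1 = b)).map Prod.snd) h
    simpa [Multiset.filter_map, Multiset.map_map, Function.comp_def] using hb
  · intro h
    ext ⟨b, c⟩
    have hbc := congrArg (Multiset.count c) (h b)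
    simp only [Multiset.count_map, Finset.filter_val, Multiset.filter_filter] at hbc ⊢
    simpa only [Prod.mk.injEq, and_comm, @eq_comm _ b] using hbc

theorem Subgroup.closure_singleton_mul_eq_top_of_coprime {A : Type*} [CommGroup A] {a b : A}
    (hgen : Subgroup.closure {a, b} = ⊤) (hco : (orderOf a).Coprime (orderOf b)) :
    Subgroup.closure {a * b} = ⊤ := by
  have hmem : ∀ {x y : A}, (orderOf x).Coprime (orderOf y) → x ∈ Subgroup.closure {x * y} := by
    intro x y hxy
    obtain ⟨e, hex, hey⟩ := Nat.chineseRemainder hxy 1 0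
    have hpow : (x * y) ^ e = x := by
      rw [mul_pow, pow_eq_pow_iff_modEq.mpr hex, pow_eq_pow_iff_modEq.mpr hey, pow_one, pow_zero,
        mul_one]
    have hmem := Subgroup.pow_mem _ (Subgroup.subset_closure (Set.mem_singleton (x * y))) e
    rwa [hpow] at hmem
  rw [eq_top_iff, ← hgen, Subgroup.closure_le, Set.insert_subset_iff, Set.singleton_subset_iff]
  exact ⟨hmem hco, mul_comm a b ▸ hmem hco.symm⟩

theorem MonoidHom.exists_conj_iff_isConj {G H : Type*} [Group G] [Group H] {g : G}
    (hg : Subgroup.closure {g} = ⊤) (φ ψ : G →* H) :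
    (∃ ρ : H, ∀ x, ρ * φ x * ρ⁻¹ = ψ x) ↔ IsConj (φ g) (ψ g) := by
  refine ⟨fun ⟨ρ, hρ⟩ => isConj_iff.mpr ⟨ρ, hρ g⟩, fun h => ?_⟩
  obtain ⟨ρ, hρ⟩ := isConj_iff.mp h
  have hconj : (MulAut.conj ρ).toMonoidHom.comp φ = ψ :=
    MonoidHom.eq_of_eqOn_dense hg fun x hx => by
      rw [Set.mem_singleton_iff.mp hx]
      exact hρ
  exact ⟨ρ, fun x => DFunLike.congr_fun hconj x⟩

open MulAction

namespace Equiv.Perm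

variable {α : Type*} {g h : Perm α} {x : α}

theorem period_eq_one_iff_apply_eq : period g x = 1 ↔ g x = x := by
  rw [period_eq_one_iff, Perm.smul_def]

theorem period_mul_of_coprime (hc : Commute g h) (hco : (period g x).Coprime (period h x)) :
    period (g * h) x = period g x * period h x := by
  have hcomp : (fun y : α => (g * h) • y) = (fun y => g • y) ∘ (fun y => h • y) :=
    funext fun y => mul_smul g h y
  simp only [period_eq_minimalPeriod, hcomp]
  exact Function.Commute.minimalPeriod_of_comp_eq_mul_of_coprime
    (fun y => by simp only [← mul_smul, hc.eq]) hco

theorem period_mul_of_apply_right_eq (hc : Commute g h) (hx : h x = x) :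
    period (g * h) x = period g x := by
  have h1 : period h x = 1 := period_eq_one_iff_apply_eq.mpr hx
  rw [period_mul_of_coprime hc (h1 ▸ Nat.coprime_one_right _), h1, mul_one]

theorem period_mul_of_apply_left_eq (hc : Commute g h) (hx : g x = x) :
    period (g * h) x = period h x := by
  rw [hc.eq]
  exact period_mul_of_apply_right_eq hc.symm hx

theorem period_conj_apply (ρ : Perm α) : period (ρ * g * ρ⁻¹) (ρ x) = period g x := by
  rw [← Nat.dvd_right_iff_eq]
  intro n
  rw [← pow_smul_eq_iff_period_dvd, ← pow_smul_eq_iff_period_dvd, conj_pow]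
  simp

theorem period_ofFn_prod {m : ℕ} {f : Fin m → Perm α} (hf : ∀ i j, i ≠ j → Commute (f i) (f j))
    {i : Fin m} (hx : ∀ j, j ≠ i → f j x = x) : period (List.ofFn f).prod x = period (f i) x := by
  induction m with
  | zero => exact i.elim0
  | succ m ih =>
    have hcomm : Commute (f 0) (List.ofFn fun j => f j.succ).prod :=
      Commute.list_prod_right _ _ fun p hp => by
        obtain ⟨j, rfl⟩ := List.mem_ofFn.mp hp
        exact hf _ _ (Fin.succ_ne_zero j).symm
    rw [List.ofFn_succ, List.prod_cons]
    cases i using Fin.cases with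
    | zero =>
      have hfix : (List.ofFn fun j => f j.succ).prod ∈ stabilizer (Perm α) x :=
        Subgroup.list_prod_mem _ fun p hp => by
          obtain ⟨j, rfl⟩ := List.mem_ofFn.mp hp
          exact mem_stabilizer_iff.mpr (hx _ (Fin.succ_ne_zero j))
      exact period_mul_of_apply_right_eq hcomm (mem_stabilizer_iff.mp hfix)
    | succ i =>
      rw [period_mul_of_apply_left_eq hcomm (hx 0 (Fin.succ_ne_zero i).symm)]
      exact ih (fun j j' hjj' => hf _ _ ((Fin.succ_injective _).ne hjj'))
        fun j hj => hx _ ((Fin.succ_injective _).ne hj)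

variable [Fintype α] [DecidableEq α]

theorem filter_period_eq_one : univ.filter (fun y => period g y = 1) = g.supportᶜ := by
  ext y
  simp [period_eq_one_iff_apply_eq]

theorem IsCycle.period_eq_card_support (hg : g.IsCycle) (hx : g x ≠ x) :
    period g x = #g.support := by
  rw [← hg.orderOf, ← Nat.dvd_right_iff_eq]
  intro n
  rw [← pow_smul_eq_iff_period_dvd, orderOf_dvd_iff_pow_eq_one, hg.pow_eq_one_iff' hx,
    Perm.smul_def]

theorem period_eq_card_support_cycleOf (hx : g x ≠ x) :
    period g x = #(g.cycleOf x).support := by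
  rw [← (isCycle_cycleOf g hx).period_eq_card_support (by rwa [cycleOf_apply_self]),
    ← Nat.dvd_right_iff_eq]
  intro n
  rw [← pow_smul_eq_iff_period_dvd, ← pow_smul_eq_iff_period_dvd, Perm.smul_def, Perm.smul_def,
    cycleOf_pow_apply_self]

theorem filter_period_eq_biUnion {t : ℕ} (ht : 2 ≤ t) :
    univ.filter (fun y : α => period g y = t) =
      (g.cycleFactorsFinset.filter (#·.support = t)).biUnion support := by
  ext x
  simp only [mem_filter, mem_univ, true_and, mem_biUnion]
  constructor
  · intro hx
    have hgx : g x ≠ x := fun hfix => by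
      rw [period_eq_one_iff_apply_eq.mpr hfix] at hx
      omega
    refine ⟨g.cycleOf x, ⟨cycleOf_mem_cycleFactorsFinset_iff.mpr (mem_support.mpr hgx), ?_⟩,
      mem_support_cycleOf_iff.mpr ⟨SameCycle.refl _ _, mem_support.mpr hgx⟩⟩
    rw [← period_eq_card_support_cycleOf hgx, hx]
  · rintro ⟨c, ⟨hc, rfl⟩, hxc⟩
    rw [cycle_is_cycleOf hxc hc, period_eq_card_support_cycleOf]
    exact mem_support.mp (mem_cycleFactorsFinset_support_le hc hxc)

theorem count_map_period {t : ℕ} (ht : 2 ≤ t) :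
    (univ.val.map (period g : α → ℕ)).count t = t * g.cycleType.count t := by
  have hcard : (univ.val.map (period g : α → ℕ)).count t =
      #(univ.filter fun y : α => period g y = t) := by
    rw [Multiset.count_map, ← card_val, filter_val]
    simp only [eq_comm]
  have hdisj : (g.cycleFactorsFinset.filter (#·.support = t) : Set (Perm α)).PairwiseDisjoint
      support := fun c hc c' hc' hne =>
    disjoint_iff_disjoint_support.mp <| cycleFactorsFinset_pairwise_disjoint g
      (mem_of_mem_filter c hc) (mem_of_mem_filter c' hc') hne
  rw [hcard, filter_period_eq_biUnion ht, card_biUnion hdisj,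
    sum_congr rfl fun c hc => (mem_filter.mp hc).2, sum_const, smul_eq_mul, mul_comm,
    cycleType_def, Multiset.count_map, ← card_val, filter_val]
  simp only [Function.comp_apply, eq_comm]

theorem isConj_iff_map_period_eq :
    IsConj g h ↔ univ.val.map (period g : α → ℕ) = univ.val.map (period h : α → ℕ) := by
  constructor
  · intro hgh
    obtain ⟨ρ, rfl⟩ := isConj_iff.mp hgh
    conv_rhs => rw [← Multiset.map_univ_val_equiv ρ, Multiset.map_map]
    exact Multiset.map_congr rfl fun x _ => (period_conj_apply ρ).symm
  · intro hper
    rw [isConj_iff_cycleType_eq]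
    ext t
    by_cases ht : 2 ≤ t
    · have hcount := congrArg (Multiset.count t) hper
      rw [count_map_period ht, count_map_period ht] at hcount
      exact Nat.eq_of_mul_eq_mul_left (by omega) hcount
    · have hnot : ∀ k : Perm α, t ∉ k.cycleType := fun k hk => ht (two_le_of_mem_cycleType hk)
      rw [Multiset.count_eq_zero.mpr (hnot g), Multiset.count_eq_zero.mpr (hnot h)]

theorem isConj_iff_map_period_eq_of_support_subset {S : Finset α} (hg : g.support ⊆ S)
    (hh : h.support ⊆ S) :
    IsConj g h ↔ S.val.map (period g : α → ℕ) = S.val.map (period h : α → ℕ) := by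
  have hsplit : ∀ k : Perm α, k.support ⊆ S →
      univ.val.map (period k : α → ℕ) = S.val.map (period k : α → ℕ) + Sᶜ.val.map fun _ => 1 := by
    intro k hk
    rw [← union_compl S, ← disjUnion_eq_union S Sᶜ disjoint_compl_right, disjUnion_val,
      Multiset.map_add]
    congr 1
    refine Multiset.map_congr rfl fun y hy => period_eq_one_iff_apply_eq.mpr ?_
    exact notMem_support.mp fun hyk => mem_compl.mp hy (hk hyk)
  rw [isConj_iff_map_period_eq, hsplit g hg, hsplit h hh, add_left_inj]

theorem isConj_mul_iff {σ β β' : Perm α} (hβ : Commute σ β) (hβ' : Commute σ β')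
    (hco : (orderOf σ).Coprime (orderOf β)) (hco' : (orderOf σ).Coprime (orderOf β')) :
    IsConj (σ * β) (σ * β') ↔ ∀ s,
      (univ.filter fun x : α => period σ x = s).val.map (period β : α → ℕ) =
        (univ.filter fun x : α => period σ x = s).val.map (period β' : α → ℕ) := by
  have key : ∀ β : Perm α, Commute σ β → (orderOf σ).Coprime (orderOf β) →
      univ.val.map (period (σ * β) : α → ℕ) =
          (univ.val.map fun x : α => (period σ x, period β x)).map (fun p => p.1 * p.2) ∧
        univ.val.map (fun x : α => (period σ x, period β x)) =
          (univ.val.map (period (σ * β) : α → ℕ)).map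
            (fun u => (u.gcd (orderOf σ), u / u.gcd (orderOf σ))) := by
    intro β hβ hco
    have hper : ∀ x : α, period (σ * β) x = period σ x * period β x := fun x =>
      period_mul_of_coprime hβ <|
        (hco.coprime_dvd_left (period_dvd_orderOf σ x)).coprime_dvd_right (period_dvd_orderOf β x)
    refine ⟨by simp only [Multiset.map_map, Function.comp_def, hper], ?_⟩
    simp only [Multiset.map_map, Function.comp_def, hper]
    refine Multiset.map_congr rfl fun x _ => ?_
    have hgcd : (period σ x * period β x).gcd (orderOf σ) = period σ x := by
      rw [Nat.Coprime.gcd_mul_right_cancel _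
        ((hco.coprime_dvd_right (period_dvd_orderOf β x)).symm),
        Nat.gcd_eq_left (period_dvd_orderOf σ x)]
    rw [hgcd, Nat.mul_div_cancel_left _ (period_pos_of_orderOf_pos (orderOf_pos σ) x)]
  obtain ⟨hprod, hsplit⟩ := key β hβ hco
  obtain ⟨hprod', hsplit'⟩ := key β' hβ' hco'
  rw [isConj_iff_map_period_eq, ← Finset.map_val_pair_eq_iff_fiberwise]
  exact ⟨fun h => by rw [hsplit, hsplit', h], fun h => by rw [hprod, hprod', h]⟩

variable {l : ℕ} {σs : Fin l → Perm α}

theorem exists_mem_support_of_mem_support_ofFn_prod (hx : x ∈ (List.ofFn σs).prod.support) :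
    ∃ i, x ∈ (σs i).support := by
  obtain ⟨g, hg, hxg⟩ := exists_mem_support_of_mem_support_prod hx
  obtain ⟨i, rfl⟩ := List.mem_ofFn.mp hg
  exact ⟨i, hxg⟩

theorem support_le_ofFn_prod (hdisj : ∀ i j, i ≠ j → Disjoint (σs i) (σs j)) (i : Fin l) :
    (σs i).support ⊆ (List.ofFn σs).prod.support :=
  support_le_prod_of_mem (List.mem_ofFn.mpr ⟨i, rfl⟩)
    (List.pairwise_ofFn.mpr fun i j hij => hdisj i j hij.ne)

theorem period_ofFn_prod_of_mem_support (hdisj : ∀ i j, i ≠ j → Disjoint (σs i) (σs j))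
    {i : Fin l} (hx : x ∈ (σs i).support) : period (List.ofFn σs).prod x = period (σs i) x :=
  period_ofFn_prod (fun i j hij => (hdisj i j hij).commute)
    fun j hj => ((hdisj j i hj) x).resolve_right (mem_support.mp hx)

theorem period_ofFn_prod_of_isCycle {d : ℕ} (hcyc : ∀ i, (σs i).IsCycle)
    (hcard : ∀ i, #(σs i).support = d) (hdisj : ∀ i j, i ≠ j → Disjoint (σs i) (σs j))
    (hx : x ∈ (List.ofFn σs).prod.support) : period (List.ofFn σs).prod x = d := by
  obtain ⟨i, hi⟩ := exists_mem_support_of_mem_support_ofFn_prod hx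
  rw [period_ofFn_prod_of_mem_support hdisj hi,
    (hcyc i).period_eq_card_support (mem_support.mp hi), hcard]

theorem forall_filter_period_ofFn_prod_iff (hdisj : ∀ i j, i ≠ j → Disjoint (σs i) (σs j))
    {d : Fin l → ℕ} (hd : Function.Injective d)
    (hper : ∀ i, ∀ x ∈ (σs i).support, period (σs i) x = d i)
    {P : Finset α → Prop} (hP : P ∅) :
    (∀ s, P (univ.filter fun x => period (List.ofFn σs).prod x = s)) ↔
      P (List.ofFn σs).prod.supportᶜ ∧ ∀ i, P (σs i).support := by
  set σ := (List.ofFn σs).prod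
  have hperσ : ∀ i, ∀ x ∈ (σs i).support, period σ x = d i := fun i x hx => by
    rw [period_ofFn_prod_of_mem_support hdisj hx, hper i x hx]
  have hblock : ∀ i, ∀ x ∈ (σs i).support,
      univ.filter (fun y => period σ y = d i) = (σs i).support := by
    intro i x hx
    ext y
    simp only [mem_filter, mem_univ, true_and]
    refine ⟨fun hy => ?_, hperσ i y⟩
    have hσy : y ∈ σ.support := by
      refine mem_support.mpr fun hfix => ?_
      have hσx : σ x ≠ x := mem_support.mp (support_le_ofFn_prod hdisj i hx)
      rw [period_eq_one_iff_apply_eq.mpr hfix, ← hperσ i x hx] at hy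
      exact hσx (period_eq_one_iff_apply_eq.mp hy.symm)
    obtain ⟨j, hj⟩ := exists_mem_support_of_mem_support_ofFn_prod hσy
    rwa [hd ((hperσ j y hj).symm.trans hy)] at hj
  constructor
  · intro h
    refine ⟨filter_period_eq_one (g := σ) ▸ h 1, fun i => ?_⟩
    obtain he | ⟨x, hx⟩ := (σs i).support.eq_empty_or_nonempty
    · exact he ▸ hP
    · exact hblock i x hx ▸ h (d i)
  · rintro ⟨hfix, hσs⟩ s
    obtain he | ⟨y, hy⟩ := (univ.filter fun x : α => period σ x = s).eq_empty_or_nonempty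
    · exact he ▸ hP
    obtain ⟨-, rfl⟩ := mem_filter.mp hy
    by_cases hσy : σ y = y
    · rw [period_eq_one_iff_apply_eq.mpr hσy, filter_period_eq_one]
      exact hfix
    · obtain ⟨i, hi⟩ := exists_mem_support_of_mem_support_ofFn_prod (mem_support.mpr hσy)
      rw [hperσ i y hi, hblock i y hi]
      exact hσs i

variable {μ : Perm α} {π : Fin l → Perm α}

theorem disjoint_ofFn_prod_of_support_subset (hdisj : ∀ i j, i ≠ j → Disjoint (σs i) (σs j))
    (hμ : μ.support ⊆ (List.ofFn σs).prod.supportᶜ) (hπ : ∀ i, (π i).support ⊆ (σs i).support) :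
    Disjoint μ (List.ofFn π).prod :=
  disjoint_prod_right _ fun p hp => by
    obtain ⟨j, rfl⟩ := List.mem_ofFn.mp hp
    have hsupp : _root_.Disjoint μ.support (π j).support :=
      disjoint_of_subset_left hμ <|
        disjoint_of_subset_right ((hπ j).trans (support_le_ofFn_prod hdisj j)) disjoint_compl_left
    exact disjoint_iff_disjoint_support.mpr hsupp

theorem period_mul_ofFn_prod_of_notMem_support (hdisj : ∀ i j, i ≠ j → Disjoint (σs i) (σs j))
    (hμ : μ.support ⊆ (List.ofFn σs).prod.supportᶜ) (hπ : ∀ i, (π i).support ⊆ (σs i).support)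
    (hx : x ∉ (List.ofFn σs).prod.support) : period (μ * (List.ofFn π).prod) x = period μ x := by
  refine period_mul_of_apply_right_eq (disjoint_ofFn_prod_of_support_subset hdisj hμ hπ).commute
    (notMem_support.mp fun hxπ => hx ?_)
  obtain ⟨j, hj⟩ := exists_mem_support_of_mem_support_ofFn_prod hxπ
  exact support_le_ofFn_prod hdisj j (hπ j hj)

theorem period_mul_ofFn_prod_of_mem_support (hdisj : ∀ i j, i ≠ j → Disjoint (σs i) (σs j))
    (hμ : μ.support ⊆ (List.ofFn σs).prod.supportᶜ) (hπ : ∀ i, (π i).support ⊆ (σs i).support)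
    {i : Fin l} (hx : x ∈ (σs i).support) : period (μ * (List.ofFn π).prod) x = period (π i) x := by
  have hμx : μ x = x :=
    notMem_support.mp fun hxμ => mem_compl.mp (hμ hxμ) (support_le_ofFn_prod hdisj i hx)
  rw [period_mul_of_apply_left_eq (disjoint_ofFn_prod_of_support_subset hdisj hμ hπ).commute hμx]
  exact period_ofFn_prod (fun i j hij => ((hdisj i j hij).mono (hπ i) (hπ j)).commute)
    fun j hj => notMem_support.mp fun hxπ => (hdisj j i hj).mem_imp (hπ j hxπ) hx

variable {μ' : Perm α} {π' : Fin l → Perm α}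

theorem map_period_mul_ofFn_prod_compl_eq_iff_isConj
    (hdisj : ∀ i j, i ≠ j → Disjoint (σs i) (σs j))
    (hμ : μ.support ⊆ (List.ofFn σs).prod.supportᶜ) (hπ : ∀ i, (π i).support ⊆ (σs i).support)
    (hμ' : μ'.support ⊆ (List.ofFn σs).prod.supportᶜ)
    (hπ' : ∀ i, (π' i).support ⊆ (σs i).support) :
    (List.ofFn σs).prod.supportᶜ.val.map (period (μ * (List.ofFn π).prod) : α → ℕ) =
        (List.ofFn σs).prod.supportᶜ.val.map (period (μ' * (List.ofFn π').prod) : α → ℕ) ↔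
      IsConj μ μ' := by
  rw [isConj_iff_map_period_eq_of_support_subset hμ hμ',
    Multiset.map_congr rfl fun x hx =>
      period_mul_ofFn_prod_of_notMem_support hdisj hμ hπ (mem_compl.mp hx),
    Multiset.map_congr rfl fun x hx =>
      period_mul_ofFn_prod_of_notMem_support hdisj hμ' hπ' (mem_compl.mp hx)]

theorem map_period_mul_ofFn_prod_support_eq_iff_isConj
    (hdisj : ∀ i j, i ≠ j → Disjoint (σs i) (σs j))
    (hμ : μ.support ⊆ (List.ofFn σs).prod.supportᶜ) (hπ : ∀ i, (π i).support ⊆ (σs i).support)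
    (hμ' : μ'.support ⊆ (List.ofFn σs).prod.supportᶜ)
    (hπ' : ∀ i, (π' i).support ⊆ (σs i).support) (i : Fin l) :
    (σs i).support.val.map (period (μ * (List.ofFn π).prod) : α → ℕ) =
        (σs i).support.val.map (period (μ' * (List.ofFn π').prod) : α → ℕ) ↔
      IsConj (π i) (π' i) := by
  rw [isConj_iff_map_period_eq_of_support_subset (hπ i) (hπ' i),
    Multiset.map_congr rfl fun x hx => period_mul_ofFn_prod_of_mem_support hdisj hμ hπ hx,
    Multiset.map_congr rfl fun x hx => period_mul_ofFn_prod_of_mem_support hdisj hμ' hπ' hx]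

end Equiv.Perm

/-- `A` is an abelian group generated by `a, b` of coprime orders,
`φ, ψ : A → S_n` satisfy `φ(a) = ψ(a) = σ = σ₁⋯σ_l` (each `σᵢ` a product of `kᵢ`
pairwise disjoint `dᵢ`-cycles, the `dᵢ` pairwise distinct), and
`φ(b) = μ₀π₁⋯π_l`, `ψ(b) = μ₀'π₁'⋯π_l'` with `μ₀, μ₀' ∈ S_{Fix(σ)}` and
`πᵢ, πᵢ' ∈ Cent₀(σᵢ)`.  Then `φ` and `ψ` are conjugate iff `μ₀, μ₀'` are conjugate
in `S_n` and `πᵢ, πᵢ'` are conjugate in `S_n` for every `i`. -/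
theorem abelian_homomorphism_conjugacy_of_coprime_orders
    {A : Type*} [CommGroup A] (a b : A)
    (hgen : Subgroup.closure ({a, b} : Set A) = ⊤)
    (hcop : Nat.Coprime (orderOf a) (orderOf b))
    {n l : ℕ} (φ ψ : A →* Equiv.Perm (Fin n))
    (σ : Equiv.Perm (Fin n)) (σs : Fin l → Equiv.Perm (Fin n))
    (k d : Fin l → ℕ) (hd : Function.Injective d)
    (hcycles : ∀ i, ∃ τ : Fin (k i) → Equiv.Perm (Fin n),
      (∀ j, (τ j).IsCycle) ∧ (∀ j, (τ j).support.card = d i) ∧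
      (∀ j j', j ≠ j' → Equiv.Perm.Disjoint (τ j) (τ j')) ∧
      σs i = (List.ofFn τ).prod)
    (hdisjσ : ∀ i i', i ≠ i' → Equiv.Perm.Disjoint (σs i) (σs i'))
    (hσ : σ = (List.ofFn σs).prod)
    (ha : φ a = σ) (ha' : ψ a = σ)
    (μ₀ μ₀' : Equiv.Perm (Fin n)) (π π' : Fin l → Equiv.Perm (Fin n))
    (hμ₀ : μ₀.support ⊆ σ.supportᶜ) (hμ₀' : μ₀'.support ⊆ σ.supportᶜ)
    (hπmem : ∀ i, π i ∈ Cent0 (σs i)) (hπ'mem : ∀ i, π' i ∈ Cent0 (σs i))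
    (hφb : φ b = μ₀ * (List.ofFn π).prod)
    (hψb : ψ b = μ₀' * (List.ofFn π').prod) :
    (∃ ρ : Equiv.Perm (Fin n), ∀ g : A, ρ * φ g * ρ⁻¹ = ψ g) ↔
      (IsConj μ₀ μ₀' ∧ ∀ i, IsConj (π i) (π' i)) := by
  subst hσ
  have hper : ∀ i, ∀ x ∈ (σs i).support, period (σs i) x = d i := by
    intro i x hx
    obtain ⟨τ, hcyc, hcard, hdisjτ, hτ⟩ := hcycles i
    rw [hτ] at hx ⊢
    exact period_ofFn_prod_of_isCycle hcyc hcard hdisjτ hx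
  have hcomm : ∀ χ : A →* Perm (Fin n), χ a = (List.ofFn σs).prod →
      Commute (List.ofFn σs).prod (χ b) := fun χ hχ => hχ ▸ (Commute.all a b).map χ
  have hcoprime : ∀ χ : A →* Perm (Fin n), χ a = (List.ofFn σs).prod →
      (orderOf (List.ofFn σs).prod).Coprime (orderOf (χ b)) := fun χ hχ =>
    (hcop.coprime_dvd_left (hχ ▸ orderOf_map_dvd χ a)).coprime_dvd_right (orderOf_map_dvd χ b)
  have hπ : ∀ i, (π i).support ⊆ (σs i).support := fun i => (hπmem i).2
  have hπ' : ∀ i, (π' i).support ⊆ (σs i).support := fun i => (hπ'mem i).2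
  rw [MonoidHom.exists_conj_iff_isConj (Subgroup.closure_singleton_mul_eq_top_of_coprime hgen hcop),
    map_mul, map_mul, ha, ha',
    isConj_mul_iff (hcomm φ ha) (hcomm ψ ha') (hcoprime φ ha) (hcoprime ψ ha'),
    forall_filter_period_ofFn_prod_iff hdisjσ hd hper (P := fun S =>
      S.val.map (period (φ b) : Fin n → ℕ) = S.val.map (period (ψ b) : Fin n → ℕ)) rfl,
    hφb, hψb]
  exact and_congr (map_period_mul_ofFn_prod_compl_eq_iff_isConj hdisjσ hμ₀ hπ hμ₀' hπ')
    (forall_congr' (map_period_mul_ofFn_prod_support_eq_iff_isConj hdisjσ hμ₀ hπ hμ₀' hπ'))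
end
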